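/- arXiv:1909.12723 — 10 statements merged into one kernel-verified Lean document; each statement's English description precedes it below -/
import Mathlib

section
/- Let φ be any persuasive straightforward signaling scheme. Define a new scheme φ' by φ'(S|1) = φ(S|1) for all S ⊆ {1,…,N}, φ'(∅|0) = 1, and φ'(S|0) = 0 for all S ≠ ∅. Then φ' is also a persuasive straightforward signaling scheme, and the expected welfare of φ' is greater than or equal to the expected welfare of φ. -/
/-! In the state θ = 0 an agent who moves only pays its cost, so the θ = 0 part of any scheme
contributes at most 0 to the welfare and to each move constraint, and at least `-r i` to the
stay constraint of agent `i`. The point mass on `∅` attains exactly these bounds, and the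
θ = 1 part is left unchanged, so every constraint and the welfare move in the right direction. -/

open Finset

noncomputable section

/-- Welfare `W(θ, S) = θ·|S|·F(|S|) − Σ_{i∈S} r(i)`. -/
def W (F r : ℕ → ℝ) (θ : ℕ) (S : Finset ℕ) : ℝ :=
  (θ : ℝ) * S.card * F S.card - ∑ i ∈ S, r i

/-- A straightforward signaling scheme: for each θ ∈ {0,1}, `φ θ` is a probability
distribution over the subsets of the agent set `{1,…,N}`. -/
def IsScheme (N : ℕ) (φ : ℕ → Finset ℕ → ℝ) : Prop :=
  (∀ θ ∈ ({0, 1} : Finset ℕ), ∀ S ∈ (Icc 1 N).powerset, 0 ≤ φ θ S) ∧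
  (∀ θ ∈ ({0, 1} : Finset ℕ), ∑ S ∈ (Icc 1 N).powerset, φ θ S = 1)

/-- Expected welfare with prior μ(1) = μ1, μ(0) = 1 − μ1. -/
def EW (N : ℕ) (F r : ℕ → ℝ) (μ1 : ℝ) (φ : ℕ → Finset ℕ → ℝ) : ℝ :=
  (1 - μ1) * ∑ S ∈ (Icc 1 N).powerset, φ 0 S * W F r 0 S +
  μ1 * ∑ S ∈ (Icc 1 N).powerset, φ 1 S * W F r 1 S

/-- Persuasiveness: the move constraint and the stay constraint for every agent. -/
def Persuasive (N : ℕ) (F r : ℕ → ℝ) (μ1 : ℝ) (φ : ℕ → Finset ℕ → ℝ) : Prop :=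
  ∀ i ∈ Icc 1 N,
    (0 ≤ (1 - μ1) * ∑ S ∈ (Icc 1 N).powerset.filter (fun S => i ∈ S),
            φ 0 S * ((0 : ℝ) * F S.card - r i) +
          μ1 * ∑ S ∈ (Icc 1 N).powerset.filter (fun S => i ∈ S),
            φ 1 S * ((1 : ℝ) * F S.card - r i)) ∧
    ((1 - μ1) * ∑ S ∈ (Icc 1 N).powerset.filter (fun S => i ∉ S),
        φ 0 S * ((0 : ℝ) * F (S.card + 1) - r i) +
      μ1 * ∑ S ∈ (Icc 1 N).powerset.filter (fun S => i ∉ S),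
        φ 1 S * ((1 : ℝ) * F (S.card + 1) - r i) ≤ 0)

theorem sum_dirac_mul {α : Type*} [DecidableEq α] {p : α → ℝ} {a : α}
    (hp : ∀ x, p x = if x = a then 1 else 0) (s : Finset α) (g : α → ℝ) :
    ∑ x ∈ s, p x * g x = if a ∈ s then g a else 0 := by
  simp only [hp, ite_mul, one_mul, zero_mul, sum_ite_eq']

theorem sum_mul_nonpos_of_nonneg {α : Type*} {s : Finset α} {p g : α → ℝ}
    (hp : ∀ x ∈ s, 0 ≤ p x) (hg : ∀ x ∈ s, g x ≤ 0) : ∑ x ∈ s, p x * g x ≤ 0 :=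
  sum_nonpos fun x hx => mul_nonpos_of_nonneg_of_nonpos (hp x hx) (hg x hx)

theorem neg_le_sum_filter_mul_neg {α : Type*} {s : Finset α} {p : α → ℝ} {c : ℝ}
    (hp : ∀ x ∈ s, 0 ≤ p x) (h1 : ∑ x ∈ s, p x = 1) (hc : 0 ≤ c)
    (q : α → Prop) [DecidablePred q] : -c ≤ ∑ x ∈ s.filter q, p x * -c := by
  have hq : ∑ x ∈ s.filter q, p x ≤ 1 :=
    h1 ▸ sum_le_sum_of_subset_of_nonneg (filter_subset q s) fun x hx _ => hp x hx
  rw [← sum_mul]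
  simpa using mul_le_mul_of_nonpos_right hq (neg_nonpos.mpr hc)

theorem isScheme_iff {N : ℕ} {φ : ℕ → Finset ℕ → ℝ} :
    IsScheme N φ ↔
      ((∀ S ∈ (Icc 1 N).powerset, 0 ≤ φ 0 S) ∧ ∀ S ∈ (Icc 1 N).powerset, 0 ≤ φ 1 S) ∧
        ∑ S ∈ (Icc 1 N).powerset, φ 0 S = 1 ∧ ∑ S ∈ (Icc 1 N).powerset, φ 1 S = 1 := by
  simp only [IsScheme, mem_insert, mem_singleton, forall_eq_or_imp, forall_eq]

theorem W_zero (F r : ℕ → ℝ) (S : Finset ℕ) : W F r 0 S = -∑ i ∈ S, r i := by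
  simp [W]

section ZeroStateSilenced

variable {N : ℕ} {F r : ℕ → ℝ} {μ1 : ℝ} {φ φ' : ℕ → Finset ℕ → ℝ}

theorem IsScheme.of_zero_eq_dirac_empty (hφ : IsScheme N φ)
    (h1 : ∀ S, φ' 1 S = φ 1 S) (h0 : ∀ S, φ' 0 S = if S = ∅ then 1 else 0) :
    IsScheme N φ' := by
  obtain ⟨⟨-, hnn1⟩, -, hsum1⟩ := isScheme_iff.mp hφ
  refine isScheme_iff.mpr ⟨⟨fun S _ => ?_, by simpa only [h1] using hnn1⟩, ?_,
    by simpa only [h1] using hsum1⟩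
  · rw [h0]; split_ifs <;> norm_num
  · simpa using sum_dirac_mul h0 (Icc 1 N).powerset fun _ => 1

theorem Persuasive.of_zero_eq_dirac_empty (hr : ∀ i, i ≤ N → 0 ≤ r i) (hμ1 : μ1 ≤ 1)
    (hφ : IsScheme N φ) (hper : Persuasive N F r μ1 φ)
    (h1 : ∀ S, φ' 1 S = φ 1 S) (h0 : ∀ S, φ' 0 S = if S = ∅ then 1 else 0) :
    Persuasive N F r μ1 φ' := by
  obtain ⟨⟨hnn0, -⟩, hsum0, -⟩ := isScheme_iff.mp hφ
  intro i hi
  have hri : 0 ≤ r i := hr i (mem_Icc.mp hi).2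
  obtain ⟨hmove, hstay⟩ := hper i hi
  simp only [zero_mul, zero_sub] at hmove hstay ⊢
  simp only [h1, sum_dirac_mul h0, mem_filter, empty_mem_powerset, notMem_empty, true_and,
    not_false_eq_true, if_true, if_false, mul_zero, zero_add]
  have hμ : 0 ≤ 1 - μ1 := sub_nonneg.mpr hμ1
  constructor
  · have : ∑ S ∈ (Icc 1 N).powerset.filter (i ∈ ·), φ 0 S * -r i ≤ 0 :=
      sum_mul_nonpos_of_nonneg (fun S hS => hnn0 S (mem_filter.mp hS).1) fun _ _ => by linarith
    linarith [mul_nonpos_of_nonneg_of_nonpos hμ this]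
  · have := neg_le_sum_filter_mul_neg hnn0 hsum0 hri (i ∉ ·)
    linarith [mul_le_mul_of_nonneg_left this hμ]

theorem EW_le_of_zero_eq_dirac_empty (hr : ∀ i, i ≤ N → 0 ≤ r i) (hμ1 : μ1 ≤ 1)
    (hφ : IsScheme N φ) (h1 : ∀ S, φ' 1 S = φ 1 S)
    (h0 : ∀ S, φ' 0 S = if S = ∅ then 1 else 0) :
    EW N F r μ1 φ ≤ EW N F r μ1 φ' := by
  obtain ⟨⟨hnn0, -⟩, -⟩ := isScheme_iff.mp hφ
  have hW : ∑ S ∈ (Icc 1 N).powerset, φ 0 S * W F r 0 S ≤ 0 :=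
    sum_mul_nonpos_of_nonneg hnn0 fun S hS => by
      rw [W_zero, neg_nonpos]
      exact sum_nonneg fun j hj => hr j (mem_Icc.mp (mem_powerset.mp hS hj)).2
  have hW' : W F r 0 ∅ = 0 := by simp [W_zero]
  simp only [EW, h1, sum_dirac_mul h0, empty_mem_powerset, if_true, hW', mul_zero, zero_add]
  linarith [mul_nonpos_of_nonneg_of_nonpos (sub_nonneg.mpr hμ1) hW]

end ZeroStateSilenced

theorem stmt0_general (N : ℕ) (F r : ℕ → ℝ)
    (hrnn : ∀ i, i ≤ N → 0 ≤ r i)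
    (μ1 : ℝ) (hμ1 : μ1 < 1)
    (φ : ℕ → Finset ℕ → ℝ) (hsch : IsScheme N φ) (hper : Persuasive N F r μ1 φ)
    (φ' : ℕ → Finset ℕ → ℝ)
    (hφ'1 : ∀ S : Finset ℕ, φ' 1 S = φ 1 S)
    (hφ'0 : ∀ S : Finset ℕ, φ' 0 S = if S = ∅ then 1 else 0) :
    IsScheme N φ' ∧ Persuasive N F r μ1 φ' ∧
      EW N F r μ1 φ ≤ EW N F r μ1 φ' :=
  ⟨hsch.of_zero_eq_dirac_empty hφ'1 hφ'0,
    hper.of_zero_eq_dirac_empty hrnn hμ1.le hsch hφ'1 hφ'0,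
    EW_le_of_zero_eq_dirac_empty hrnn hμ1.le hsch hφ'1 hφ'0⟩

/-- replacing the θ = 0 component of a persuasive scheme by the point mass
on ∅ preserves persuasiveness and weakly increases expected welfare. -/
theorem stmt0 (N : ℕ) (hN : 1 ≤ N) (F r : ℕ → ℝ)
    (hFnn : ∀ n, n ≤ N → 0 ≤ F n) (hF01 : F 0 = F 1)
    (hFmono : ∀ n, n + 1 ≤ N → F (n + 1) ≤ F n)
    (hr0 : r 0 = 0) (hrnn : ∀ i, i ≤ N → 0 ≤ r i)
    (hrmono : ∀ i, i + 1 ≤ N → r i ≤ r (i + 1))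
    (μ1 : ℝ) (hμ0 : 0 < μ1) (hμ1 : μ1 < 1)
    (φ : ℕ → Finset ℕ → ℝ) (hsch : IsScheme N φ) (hper : Persuasive N F r μ1 φ)
    (φ' : ℕ → Finset ℕ → ℝ)
    (hφ'1 : ∀ S : Finset ℕ, φ' 1 S = φ 1 S)
    (hφ'0 : ∀ S : Finset ℕ, φ' 0 S = if S = ∅ then 1 else 0) :
    IsScheme N φ' ∧ Persuasive N F r μ1 φ' ∧
      EW N F r μ1 φ ≤ EW N F r μ1 φ' :=
  stmt0_general N F r hrnn μ1 hμ1 φ hsch hper φ' hφ'1 hφ'0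

end
end

section
/- Let φ be a straightforward signaling scheme with φ(∅|0) = 1, and for i,k ∈ {1,…,N} define p_{ik} = Σ_{S⊆{1,…,N}: i∈S, |S|=k} φ(S|1). Then for each agent i ∈ {1,…,N}, the stay constraint Σ_{θ∈{0,1}} μ(θ) Σ_{S: i∉S} φ(S|θ)·(θ·F(|S|+1) − r(i)) ≤ 0 holds if and only if Σ_{k=1}^{N−1} ((1/k)·Σ_{j=1}^N p_{jk} − p_{ik})·(F(k+1) − r(i)) + (1 − Σ_{k=1}^N (1/k)·Σ_{j=1}^N p_{jk})·(F(1) − r(i)) ≤ (μ(0)/μ(1))·r(i). -/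
open Finset

noncomputable section

/-- `p_{ik}`: probability, conditional on θ = 1, that `k` agents are recommended to
move and agent `i` is among them. -/
def pOf (N : ℕ) (φ : ℕ → Finset ℕ → ℝ) (i k : ℕ) : ℝ :=
  ∑ S ∈ (Icc 1 N).powerset.filter (fun S => i ∈ S ∧ S.card = k), φ 1 S

/-! Under θ = 0 the scheme recommends ∅ with probability one, so the θ = 0 part of the stay
constraint is just `-r i`. Under θ = 1, group the sets `S ∌ i` by their size `k`: their mass is
`q_k - p_{ik}`, where `q_k` (`probNumMovers`) is the probability that exactly `k` agents are
recommended, and double counting gives `Σ_j p_{jk} = k q_k`. The size-`N` term vanishes because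
the only such set is `{1,…,N} ∋ i`, and the size-`0` term has mass `q_0 = 1 - Σ_{k ≥ 1} q_k`. -/

section Powerset

variable {α : Type*} [DecidableEq α] (A : Finset α) (f : Finset α → ℝ)

theorem sum_sum_filter_mem_and_card_eq (k : ℕ) :
    ∑ j ∈ A, ∑ S ∈ A.powerset.filter (fun S => j ∈ S ∧ S.card = k), f S =
      k * ∑ S ∈ A.powerset.filter (fun S => S.card = k), f S := by
  simp_rw [and_comm, ← filter_filter, sum_filter]
  rw [sum_comm, mul_sum]
  refine sum_congr rfl fun S hS => ?_
  split_ifs with hk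
  · rw [sum_ite_mem, inter_eq_right.mpr (mem_powerset.mp hS), sum_const, nsmul_eq_mul, hk]
  · simp

theorem sum_filter_notMem_and_card_eq (i : α) (k : ℕ) :
    ∑ S ∈ A.powerset.filter (fun S => i ∉ S ∧ S.card = k), f S =
      ∑ S ∈ A.powerset.filter (fun S => S.card = k), f S -
        ∑ S ∈ A.powerset.filter (fun S => i ∈ S ∧ S.card = k), f S := by
  rw [eq_sub_iff_add_eq, add_comm,
    ← sum_filter_add_sum_filter_not (A.powerset.filter (fun S => S.card = k)) (i ∈ ·)]
  simp only [filter_filter, and_comm]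

end Powerset

def probNumMovers (N : ℕ) (φ : ℕ → Finset ℕ → ℝ) (k : ℕ) : ℝ :=
  ∑ S ∈ (Icc 1 N).powerset.filter (fun S => S.card = k), φ 1 S

section Model

variable {N : ℕ} {φ : ℕ → Finset ℕ → ℝ}

theorem one_div_mul_sum_pOf {k : ℕ} (hk : k ≠ 0) :
    1 / (k : ℝ) * ∑ j ∈ Icc 1 N, pOf N φ j k = probNumMovers N φ k := by
  unfold pOf
  rw [sum_sum_filter_mem_and_card_eq, probNumMovers, ← mul_assoc,
    one_div_mul_cancel (Nat.cast_ne_zero.mpr hk), one_mul]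

theorem pOf_zero (i : ℕ) : pOf N φ i 0 = 0 := by
  refine sum_eq_zero fun S hS => ?_
  obtain ⟨-, hiS, hS0⟩ := mem_filter.mp hS
  simp [card_eq_zero.mp hS0] at hiS

theorem pOf_eq_probNumMovers_of_mem {i : ℕ} (hi : i ∈ Icc 1 N) :
    pOf N φ i N = probNumMovers N φ N := by
  refine sum_congr (filter_congr fun S hS => ?_) fun _ _ => rfl
  have hSA := mem_powerset.mp hS
  refine ⟨And.right, fun hcard => ⟨?_, hcard⟩⟩
  rwa [eq_of_subset_of_card_le hSA (by simp [hcard])]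

theorem probNumMovers_zero : probNumMovers N φ 0 = φ 1 ∅ := by
  rw [probNumMovers, ← powersetCard_eq_filter, powersetCard_zero, sum_singleton]

theorem card_mem_range_of_mem_powerset {S : Finset ℕ} (hS : S ∈ (Icc 1 N).powerset) :
    S.card ∈ range (N + 1) := by
  simpa [Nat.lt_succ_iff] using card_le_card (mem_powerset.mp hS)

theorem sum_range_probNumMovers :
    ∑ k ∈ range (N + 1), probNumMovers N φ k = ∑ S ∈ (Icc 1 N).powerset, φ 1 S :=
  sum_fiberwise_of_maps_to (fun _ => card_mem_range_of_mem_powerset) _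

theorem stay_sum_state_zero (hsch : IsScheme N φ) (h0 : φ 0 ∅ = 1) (F r : ℕ → ℝ) (i : ℕ) :
    ∑ S ∈ (Icc 1 N).powerset.filter (fun S => i ∉ S),
      φ 0 S * ((0 : ℝ) * F (S.card + 1) - r i) = -r i := by
  have hpos : ∀ S ∈ (Icc 1 N).powerset, 0 ≤ φ 0 S := hsch.1 0 (by simp)
  have hmass : ∑ S ∈ (Icc 1 N).powerset.filter (fun S => i ∉ S), φ 0 S = 1 := by
    refine le_antisymm ?_ ?_
    · exact hsch.2 0 (by simp) ▸ sum_le_sum_of_subset_of_nonneg (filter_subset _ _)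
        fun S hS _ => hpos S hS
    · exact h0 ▸ single_le_sum (fun S hS => hpos S (mem_filter.mp hS).1) (by simp)
  simp only [zero_mul, zero_sub, ← sum_mul, hmass, one_mul]

theorem stay_sum_state_one_eq_sum_range (F r : ℕ → ℝ) (i : ℕ) :
    ∑ S ∈ (Icc 1 N).powerset.filter (fun S => i ∉ S),
        φ 1 S * ((1 : ℝ) * F (S.card + 1) - r i) =
      ∑ k ∈ range (N + 1), (probNumMovers N φ k - pOf N φ i k) * (F (k + 1) - r i) := by
  rw [← sum_fiberwise_of_maps_to fun S hS => card_mem_range_of_mem_powerset (mem_filter.mp hS).1]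
  refine sum_congr rfl fun k _ => ?_
  rw [filter_filter, probNumMovers, pOf, ← sum_filter_notMem_and_card_eq, sum_mul]
  refine sum_congr rfl fun S hS => ?_
  rw [(mem_filter.mp hS).2.2, one_mul]

theorem stay_sum_state_one (hsum : ∑ S ∈ (Icc 1 N).powerset, φ 1 S = 1) (F r : ℕ → ℝ)
    {i : ℕ} (hi : i ∈ Icc 1 N) :
    ∑ S ∈ (Icc 1 N).powerset.filter (fun S => i ∉ S),
        φ 1 S * ((1 : ℝ) * F (S.card + 1) - r i) =
      ∑ k ∈ Icc 1 (N - 1), (probNumMovers N φ k - pOf N φ i k) * (F (k + 1) - r i) +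
        (1 - ∑ k ∈ Icc 1 N, probNumMovers N φ k) * (F 1 - r i) := by
  have hsplit (g : ℕ → ℝ) : ∑ k ∈ range (N + 1), g k = g 0 + ∑ k ∈ Icc 1 N, g k := by
    rw [sum_range_eq_add_Ico _ (by omega), Ico_add_one_right_eq_Icc]
  have hq0 : 1 - ∑ k ∈ Icc 1 N, probNumMovers N φ k = φ 1 ∅ := by
    rw [← hsum, ← sum_range_probNumMovers, hsplit, probNumMovers_zero, add_sub_cancel_right]
  obtain ⟨n, rfl⟩ : ∃ n, N = n + 1 := ⟨N - 1, by grind⟩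
  rw [stay_sum_state_one_eq_sum_range, hsplit, sum_Icc_succ_top (by omega), pOf_zero,
    pOf_eq_probNumMovers_of_mem hi, probNumMovers_zero, hq0, Nat.add_sub_cancel, zero_add]
  ring

theorem stay_sum_state_one_eq_marginals (hsum : ∑ S ∈ (Icc 1 N).powerset, φ 1 S = 1)
    (F r : ℕ → ℝ) {i : ℕ} (hi : i ∈ Icc 1 N) :
    ∑ S ∈ (Icc 1 N).powerset.filter (fun S => i ∉ S),
        φ 1 S * ((1 : ℝ) * F (S.card + 1) - r i) =
      ∑ k ∈ Icc 1 (N - 1),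
          ((1 / (k : ℝ)) * (∑ j ∈ Icc 1 N, pOf N φ j k) - pOf N φ i k) * (F (k + 1) - r i) +
        (1 - ∑ k ∈ Icc 1 N, (1 / (k : ℝ)) * ∑ j ∈ Icc 1 N, pOf N φ j k) * (F 1 - r i) := by
  have hq (M : ℕ) : ∀ k ∈ Icc 1 M, 1 / (k : ℝ) * ∑ j ∈ Icc 1 N, pOf N φ j k =
      probNumMovers N φ k :=
    fun k hk => one_div_mul_sum_pOf (Nat.one_le_iff_ne_zero.mp (mem_Icc.mp hk).1)
  rw [stay_sum_state_one hsum F r hi, sum_congr rfl (hq N)]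
  congr 1
  exact sum_congr rfl fun k hk => by rw [hq _ k hk]

end Model

theorem stmt3_general (N : ℕ) (F r : ℕ → ℝ)
    (μ1 : ℝ) (hμ0 : 0 < μ1)
    (φ : ℕ → Finset ℕ → ℝ) (hsch : IsScheme N φ) (h0 : φ 0 ∅ = 1)
    (i : ℕ) (hi : i ∈ Icc 1 N) :
    ((1 - μ1) * ∑ S ∈ (Icc 1 N).powerset.filter (fun S => i ∉ S),
        φ 0 S * ((0 : ℝ) * F (S.card + 1) - r i) +
      μ1 * ∑ S ∈ (Icc 1 N).powerset.filter (fun S => i ∉ S),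
        φ 1 S * ((1 : ℝ) * F (S.card + 1) - r i) ≤ 0) ↔
      (∑ k ∈ Icc 1 (N - 1),
          ((1 / (k : ℝ)) * (∑ j ∈ Icc 1 N, pOf N φ j k) - pOf N φ i k) *
            (F (k + 1) - r i) +
        (1 - ∑ k ∈ Icc 1 N, (1 / (k : ℝ)) * ∑ j ∈ Icc 1 N, pOf N φ j k) *
          (F 1 - r i)
        ≤ ((1 - μ1) / μ1) * r i) := by
  rw [stay_sum_state_zero hsch h0, stay_sum_state_one_eq_marginals (hsch.2 1 (by simp)) F r hi,
    div_mul_eq_mul_div, le_div_iff₀ hμ0]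
  constructor <;> intro h <;> linarith

/-- reformulation of the stay constraint in terms of the marginals. -/
theorem stmt3 (N : ℕ) (hN : 1 ≤ N) (F r : ℕ → ℝ)
    (hFnn : ∀ n, n ≤ N → 0 ≤ F n) (hF01 : F 0 = F 1)
    (hFmono : ∀ n, n + 1 ≤ N → F (n + 1) ≤ F n)
    (hr0 : r 0 = 0) (hrnn : ∀ i, i ≤ N → 0 ≤ r i)
    (hrmono : ∀ i, i + 1 ≤ N → r i ≤ r (i + 1))
    (μ1 : ℝ) (hμ0 : 0 < μ1) (hμ1 : μ1 < 1)
    (φ : ℕ → Finset ℕ → ℝ) (hsch : IsScheme N φ) (h0 : φ 0 ∅ = 1)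
    (i : ℕ) (hi : i ∈ Icc 1 N) :
    ((1 - μ1) * ∑ S ∈ (Icc 1 N).powerset.filter (fun S => i ∉ S),
        φ 0 S * ((0 : ℝ) * F (S.card + 1) - r i) +
      μ1 * ∑ S ∈ (Icc 1 N).powerset.filter (fun S => i ∉ S),
        φ 1 S * ((1 : ℝ) * F (S.card + 1) - r i) ≤ 0) ↔
      (∑ k ∈ Icc 1 (N - 1),
          ((1 / (k : ℝ)) * (∑ j ∈ Icc 1 N, pOf N φ j k) - pOf N φ i k) *
            (F (k + 1) - r i) +
        (1 - ∑ k ∈ Icc 1 N, (1 / (k : ℝ)) * ∑ j ∈ Icc 1 N, pOf N φ j k) *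
          (F 1 - r i)
        ≤ ((1 - μ1) / μ1) * r i) :=
  stmt3_general N F r μ1 hμ0 φ hsch h0 i hi

end
end

section
/- Let N ≥ 1, let k ∈ {1,…,N} be an integer, and let a = (a_1,…,a_N) ∈ [0,1]^N satisfy Σ_{i=1}^N a_i = k. Then there exists a probability distribution ψ on the k-element subsets of {1,…,N} (i.e., ψ(S) ≥ 0 for each S ⊆ {1,…,N} with |S| = k, and Σ_{S: |S|=k} ψ(S) = 1) such that for every i ∈ {1,…,N}, Σ_{S: |S|=k, i∈S} ψ(S) = a_i. -/
/-!
The inclusion-probability vectors of random `k`-subsets form a convex set, and it contains every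
`0/1` point of the hypersimplex `{a ∈ [0,1]^s | ∑ a = k}` (a point mass on its support). A point
of the hypersimplex cannot have exactly one fractional coordinate, since the sum is an integer.
Given two fractional coordinates `i ≠ j`, shifting mass from `j` to `i`, or from `i` to `j`, until
one of them reaches `0` or `1` exhibits the point on a segment between two hypersimplex points with
fewer fractional coordinates, so induction on that number concludes.
-/

open Finset

section InclusionProbabilities

variable {α : Type*} [DecidableEq α]

def hypersimplex (s : Finset α) (k : ℕ) : Set (α → ℝ) :=
  {a | (∀ i ∈ s, a i ∈ Set.Icc 0 1) ∧ ∑ i ∈ s, a i = k}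

def inclusionProbabilities (s : Finset α) (k : ℕ) : Set (α → ℝ) :=
  {a | ∃ ψ : Finset α → ℝ, (∀ S ∈ s.powersetCard k, 0 ≤ ψ S) ∧
    ∑ S ∈ s.powersetCard k, ψ S = 1 ∧
    ∀ i ∈ s, ∑ S ∈ s.powersetCard k with i ∈ S, ψ S = a i}

theorem convex_inclusionProbabilities (s : Finset α) (k : ℕ) :
    Convex ℝ (inclusionProbabilities s k) := by
  rintro a ⟨φ, hφ0, hφ1, hφa⟩ b ⟨ψ, hψ0, hψ1, hψb⟩ μ ν hμ hν hμν
  refine ⟨μ • φ + ν • ψ, fun S hS => ?_, ?_, fun i hi => ?_⟩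
  · exact add_nonneg (mul_nonneg hμ (hφ0 S hS)) (mul_nonneg hν (hψ0 S hS))
  · simp only [Pi.add_apply, Pi.smul_apply, smul_eq_mul, sum_add_distrib, ← mul_sum, hφ1, hψ1]
    linarith
  · simp only [Pi.add_apply, Pi.smul_apply, smul_eq_mul, sum_add_distrib, ← mul_sum, hφa i hi,
      hψb i hi]

theorem mem_inclusionProbabilities_of_forall_eq_zero_or_one {s : Finset α} {k : ℕ}
    {a : α → ℝ} (h01 : ∀ i ∈ s, a i = 0 ∨ a i = 1) (hsum : ∑ i ∈ s, a i = k) :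
    a ∈ inclusionProbabilities s k := by
  set T := {i ∈ s | a i = 1}
  have ha : ∀ i ∈ s, a i = if i ∈ T then 1 else 0 := by
    intro i hi
    rcases h01 i hi with h | h <;> simp [T, hi, h]
  have hT : T ∈ s.powersetCard k := by
    rw [sum_congr rfl ha, sum_boole, filter_mem_eq_inter,
      inter_eq_right.mpr (filter_subset _ _)] at hsum
    exact mem_powersetCard.mpr ⟨filter_subset _ _, by exact_mod_cast hsum⟩
  refine ⟨Pi.single T 1, fun S _ =>
    (Pi.single_nonneg.mpr zero_le_one : (0 : Finset α → ℝ) ≤ Pi.single T 1) S, ?_, fun i hi => ?_⟩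
  · simp [hT]
  · rw [ha i hi, sum_pi_single']
    simp [hT]

theorem exists_ne_mem_Ioo_of_mem_hypersimplex {s : Finset α} {k : ℕ} {a : α → ℝ}
    (ha : a ∈ hypersimplex s k) {i : α} (hi : i ∈ s) (hai : a i ∈ Set.Ioo 0 1) :
    ∃ j ∈ s, j ≠ i ∧ a j ∈ Set.Ioo 0 1 := by
  by_contra! h
  have h01 : ∀ j ∈ s.erase i, a j = if a j = 1 then 1 else 0 := by
    intro j hj
    obtain ⟨hji, hj⟩ := mem_erase.mp hj
    have : a j ∈ Set.Icc 0 1 \ Set.Ioo 0 1 := ⟨ha.1 j hj, h j hj hji⟩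
    rw [Set.Icc_sdiff_Ioo_same zero_le_one] at this
    obtain h | h : a j = 0 ∨ a j = 1 := this <;> simp [h]
  -- `a i` would be the difference of two natural numbers, yet lies strictly between 0 and 1.
  set m := #{j ∈ s.erase i | a j = 1}
  have hai_eq : a i = k - m := by
    rw [← ha.2, ← add_sum_erase s a hi, sum_congr rfl h01, sum_boole]
    ring
  rw [hai_eq] at hai
  have hmk : m < k := by exact_mod_cast sub_pos.mp hai.1
  have : (m : ℝ) + 1 ≤ k := by exact_mod_cast hmk
  linarith [hai.2]

def transfer (i j : α) (t : ℝ) (a : α → ℝ) : α → ℝ :=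
  a + t • (Pi.single i 1 - Pi.single j 1)

section transfer

variable {i j x : α} {t : ℝ} {a : α → ℝ}

theorem transfer_apply_left (hij : i ≠ j) : transfer i j t a i = a i + t := by
  simp [transfer, hij]

theorem transfer_apply_right (hij : i ≠ j) : transfer i j t a j = a j - t := by
  simp [transfer, hij.symm, sub_eq_add_neg]

theorem transfer_apply_of_ne (hi : x ≠ i) (hj : x ≠ j) : transfer i j t a x = a x := by
  simp [transfer, hi, hj]

theorem sum_transfer {s : Finset α} (hi : i ∈ s) (hj : j ∈ s) :
    ∑ x ∈ s, transfer i j t a x = ∑ x ∈ s, a x := by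
  simp [transfer, sum_add_distrib, ← mul_sum, sum_sub_distrib, sum_pi_single', hi, hj]

theorem transfer_mem_hypersimplex {s : Finset α} {k : ℕ} (ha : a ∈ hypersimplex s k)
    (hij : i ≠ j) (hi : i ∈ s) (hj : j ∈ s) (ht : 0 ≤ t) (hti : t ≤ 1 - a i) (htj : t ≤ a j) :
    transfer i j t a ∈ hypersimplex s k := by
  refine ⟨fun x hx => ?_, (sum_transfer hi hj).trans ha.2⟩
  obtain ⟨h0, h1⟩ := ha.1 x hx
  by_cases hxi : x = i
  · subst hxi
    rw [transfer_apply_left hij]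
    constructor <;> linarith
  by_cases hxj : x = j
  · subst hxj
    rw [transfer_apply_right hij]
    constructor <;> linarith
  rw [transfer_apply_of_ne hxi hxj]
  exact ha.1 x hx

theorem card_filter_transfer_mem_Ioo_lt {s : Finset α} (hij : i ≠ j) (hi : i ∈ s) (hj : j ∈ s)
    (hai : a i ∈ Set.Ioo 0 1) (haj : a j ∈ Set.Ioo 0 1) :
    #{x ∈ s | transfer i j (min (1 - a i) (a j)) a x ∈ Set.Ioo 0 1} <
      #{x ∈ s | a x ∈ Set.Ioo 0 1} := by
  apply card_lt_card
  rw [ssubset_iff_of_subset]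
  · rcases min_cases (1 - a i) (a j) with ⟨hmin, -⟩ | ⟨hmin, -⟩
    · refine ⟨i, mem_filter.mpr ⟨hi, hai⟩, fun h => ?_⟩
      have := (mem_filter.mp h).2.2
      rw [transfer_apply_left hij, hmin] at this
      linarith
    · refine ⟨j, mem_filter.mpr ⟨hj, haj⟩, fun h => ?_⟩
      have := (mem_filter.mp h).2.1
      rw [transfer_apply_right hij, hmin] at this
      linarith
  · intro x hx
    obtain ⟨hxs, hx⟩ := mem_filter.mp hx
    refine mem_filter.mpr ⟨hxs, ?_⟩
    by_cases hxi : x = i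
    · exact hxi ▸ hai
    by_cases hxj : x = j
    · exact hxj ▸ haj
    rwa [transfer_apply_of_ne hxi hxj] at hx

theorem mem_segment_transfer {t₁ t₂ : ℝ} (h₁ : 0 < t₁) (h₂ : 0 < t₂) :
    a ∈ segment ℝ (transfer i j t₁ a) (transfer j i t₂ a) := by
  refine ⟨t₂ / (t₁ + t₂), t₁ / (t₁ + t₂), by positivity, by positivity,
    by field_simp; ring, ?_⟩
  ext x
  simp only [transfer, Pi.add_apply, Pi.smul_apply, Pi.sub_apply, smul_eq_mul]
  field_simp
  ring

end transfer

theorem hypersimplex_subset_inclusionProbabilities (s : Finset α) (k : ℕ) :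
    hypersimplex s k ⊆ inclusionProbabilities s k := by
  intro a ha
  induction hn : #{x ∈ s | a x ∈ Set.Ioo 0 1} using Nat.strong_induction_on generalizing a with
  | _ n ih =>
  obtain hfrac | ⟨i, hi⟩ := ({x ∈ s | a x ∈ Set.Ioo 0 1} : Finset α).eq_empty_or_nonempty
  · refine mem_inclusionProbabilities_of_forall_eq_zero_or_one (fun x hx => ?_) ha.2
    have : a x ∈ Set.Icc 0 1 \ Set.Ioo 0 1 := ⟨ha.1 x hx, filter_eq_empty_iff.mp hfrac hx⟩
    rwa [Set.Icc_sdiff_Ioo_same zero_le_one] at this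
  obtain ⟨his, hai⟩ := mem_filter.mp hi
  obtain ⟨j, hjs, hji, haj⟩ := exists_ne_mem_Ioo_of_mem_hypersimplex ha his hai
  have ht₁ : 0 < min (1 - a i) (a j) := lt_min (sub_pos.mpr hai.2) haj.1
  have ht₂ : 0 < min (1 - a j) (a i) := lt_min (sub_pos.mpr haj.2) hai.1
  have h₁ := ih _ (hn ▸ card_filter_transfer_mem_Ioo_lt hji.symm his hjs hai haj)
    (transfer_mem_hypersimplex ha hji.symm his hjs ht₁.le (min_le_left _ _) (min_le_right _ _)) rfl
  have h₂ := ih _ (hn ▸ card_filter_transfer_mem_Ioo_lt hji hjs his haj hai)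
    (transfer_mem_hypersimplex ha hji hjs his ht₂.le (min_le_left _ _) (min_le_right _ _)) rfl
  exact (convex_inclusionProbabilities s k).segment_subset h₁ h₂ (mem_segment_transfer ht₁ ht₂)

end InclusionProbabilities

theorem stmt4_general (N k : ℕ)
    (a : ℕ → ℝ) (ha : ∀ i ∈ Finset.Icc 1 N, 0 ≤ a i ∧ a i ≤ 1)
    (hsum : ∑ i ∈ Finset.Icc 1 N, a i = (k : ℝ)) :
    ∃ ψ : Finset ℕ → ℝ,
      (∀ S ∈ (Finset.Icc 1 N).powerset.filter (fun S => S.card = k), 0 ≤ ψ S) ∧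
      (∑ S ∈ (Finset.Icc 1 N).powerset.filter (fun S => S.card = k), ψ S = 1) ∧
      (∀ i ∈ Finset.Icc 1 N,
        ∑ S ∈ (Finset.Icc 1 N).powerset.filter (fun S => S.card = k ∧ i ∈ S), ψ S
          = a i) := by
  obtain ⟨ψ, hψ0, hψ1, hψa⟩ := hypersimplex_subset_inclusionProbabilities _ _ ⟨ha, hsum⟩
  rw [powersetCard_eq_filter] at hψ0 hψ1 hψa
  refine ⟨ψ, hψ0, hψ1, fun i hi => ?_⟩
  rw [← hψa i hi, filter_filter]

/-- any vector of marginal inclusion probabilities in the `k`-uniform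
matroid base polytope (entries in [0,1] summing to `k`) is realizable as the
first-order inclusion probabilities of a random `k`-element subset of `{1,…,N}`. -/
theorem stmt4 (N k : ℕ) (hN : 1 ≤ N) (hk : k ∈ Finset.Icc 1 N)
    (a : ℕ → ℝ) (ha : ∀ i ∈ Finset.Icc 1 N, 0 ≤ a i ∧ a i ≤ 1)
    (hsum : ∑ i ∈ Finset.Icc 1 N, a i = (k : ℝ)) :
    ∃ ψ : Finset ℕ → ℝ,
      (∀ S ∈ (Finset.Icc 1 N).powerset.filter (fun S => S.card = k), 0 ≤ ψ S) ∧
      (∑ S ∈ (Finset.Icc 1 N).powerset.filter (fun S => S.card = k), ψ S = 1) ∧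
      (∀ i ∈ Finset.Icc 1 N,
        ∑ S ∈ (Finset.Icc 1 N).powerset.filter (fun S => S.card = k ∧ i ∈ S), ψ S
          = a i) :=
  stmt4_general N k a ha hsum
end

section
/- Suppose p = (p_{ik})_{i,k∈{1,…,N}} with p_{ik} > 0 for all i,k satisfies: (M_i) Σ_{k=1}^N p_{ik}·(F(k) − r(i)) ≥ 0 for every i; (S_i) Σ_{k=1}^{N−1} ((1/k)·Σ_{j=1}^N p_{jk} − p_{ik})·(F(k+1) − r(i)) + (1 − Σ_{k=1}^N (1/k)·Σ_{j=1}^N p_{jk})·(F(1) − r(i)) ≤ (μ(0)/μ(1))·r(i) for every i; (C) Σ_{k=1}^N (1/k)·Σ_{i=1}^N p_{ik} ≤ 1; and (V) k·p_{ik} ≤ Σ_{j=1}^N p_{jk} for every i,k. Then there exists a persuasive straightforward signaling scheme φ with φ(∅|0) = 1 such that for all i,k ∈ {1,…,N}, Σ_{S⊆{1,…,N}: i∈S, |S|=k} φ(S|1) = p_{ik}. -/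
open Finset

noncomputable section

lemma hyper (A : Finset ℕ) (k : ℕ) :
    ∀ d : ℕ, ∀ x : ℕ → ℝ,
    (A.filter (fun i => x i ≠ 0 ∧ x i ≠ 1)).card = d →
    (∀ i ∈ A, 0 ≤ x i) → (∀ i ∈ A, x i ≤ 1) → (∑ i ∈ A, x i = k) →
    ∃ w : Finset ℕ → ℝ, (∀ S, 0 ≤ w S) ∧
      (∀ S, w S ≠ 0 → S ∈ A.powerset ∧ S.card = k) ∧
      (∑ S ∈ A.powerset, w S = 1) ∧
      (∀ i ∈ A, ∑ S ∈ A.powerset.filter (fun S => i ∈ S), w S = x i) := by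
  intro d
  induction d using Nat.strong_induction_on with
  | _ d IH =>
  intro x hd hx0 hx1 hsum
  by_cases hdz : (A.filter (fun i => x i ≠ 0 ∧ x i ≠ 1)) = ∅
  · -- all coordinates are 0 or 1
    have h01 : ∀ i ∈ A, x i = 0 ∨ x i = 1 := by
      intro i hi
      by_contra hcon
      push_neg at hcon
      have : i ∈ A.filter (fun i => x i ≠ 0 ∧ x i ≠ 1) :=
        mem_filter.2 ⟨hi, hcon.1, hcon.2⟩
      simp [hdz] at this
    set S0 := A.filter (fun i => x i = 1) with hS0
    have hS0sub : S0 ⊆ A := filter_subset _ _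
    have hcard : (S0.card : ℝ) = (k : ℝ) := by
      rw [← hsum]
      rw [show ∑ i ∈ A, x i = ∑ i ∈ A, (if x i = 1 then (1:ℝ) else 0) from
        Finset.sum_congr rfl (fun i hi => by
          rcases h01 i hi with h | h <;> simp [h])]
      rw [Finset.sum_boole]
    have hcardk : S0.card = k := by exact_mod_cast hcard
    refine ⟨fun S => if S = S0 then 1 else 0, ?_, ?_, ?_, ?_⟩
    · intro S; dsimp only; split <;> norm_num
    · intro S hS
      have : S = S0 := by by_contra h; simp [h] at hS
      subst this
      exact ⟨mem_powerset.2 hS0sub, hcardk⟩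
    · rw [Finset.sum_ite_eq' _ S0 (fun _ => (1:ℝ))]
      simp [mem_powerset.2 hS0sub]
    · intro i hi
      rw [Finset.sum_ite_eq' _ S0 (fun _ => (1:ℝ))]
      rcases h01 i hi with h | h
      · have : i ∉ S0 := by simp [hS0, h]
        simp [this, h, mem_filter]
      · have : i ∈ S0 := mem_filter.2 ⟨hi, h⟩
        simp [mem_filter, mem_powerset.2 hS0sub, this, h]
  · -- there are fractional coordinates; pipage
    obtain ⟨i, hi⟩ := Finset.nonempty_iff_ne_empty.2 hdz
    have hiA : i ∈ A := (mem_filter.1 hi).1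
    have hix : x i ≠ 0 ∧ x i ≠ 1 := (mem_filter.1 hi).2
    -- there must be a second fractional coordinate
    have hj : ∃ j ∈ A.filter (fun i => x i ≠ 0 ∧ x i ≠ 1), j ≠ i := by
      by_contra hcon
      push_neg at hcon
      have hfe : A.filter (fun i => x i ≠ 0 ∧ x i ≠ 1) = {i} := by
        apply Finset.eq_singleton_iff_unique_mem.2
        exact ⟨hi, fun j hjm => hcon j hjm⟩
      have h01 : ∀ l ∈ A.erase i, x l = 0 ∨ x l = 1 := by
        intro l hl
        by_contra hc; push_neg at hc
        have : l ∈ A.filter (fun i => x i ≠ 0 ∧ x i ≠ 1) :=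
          mem_filter.2 ⟨Finset.mem_of_mem_erase hl, hc.1, hc.2⟩
        rw [hfe, Finset.mem_singleton] at this
        exact (Finset.ne_of_mem_erase hl) this
      have hsplit : x i + ∑ l ∈ A.erase i, x l = (k : ℝ) := by
        rw [Finset.add_sum_erase _ _ hiA]; exact hsum
      have herase : ∑ l ∈ A.erase i, x l =
          (((A.erase i).filter (fun l => x l = 1)).card : ℝ) := by
        rw [show ∑ l ∈ A.erase i, x l
            = ∑ l ∈ A.erase i, (if x l = 1 then (1:ℝ) else 0) from
          Finset.sum_congr rfl (fun l hl => by
            rcases h01 l hl with h | h <;> simp [h])]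
        rw [Finset.sum_boole]
      set m := ((A.erase i).filter (fun l => x l = 1)).card with hm
      have hxi : x i = (k : ℝ) - m := by rw [herase] at hsplit; linarith
      have hxi0 : 0 < x i := lt_of_le_of_ne (hx0 i hiA) (Ne.symm hix.1)
      have hxi1 : x i < 1 := lt_of_le_of_ne (hx1 i hiA) hix.2
      rcases le_or_gt k m with h | h
      · have : (k : ℝ) ≤ (m : ℝ) := by exact_mod_cast h
        linarith
      · have : (m : ℝ) + 1 ≤ (k : ℝ) := by exact_mod_cast h
        linarith
    obtain ⟨j, hjm, hji⟩ := hj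
    have hjA : j ∈ A := (mem_filter.1 hjm).1
    have hjx : x j ≠ 0 ∧ x j ≠ 1 := (mem_filter.1 hjm).2
    have hxi0 : 0 < x i := lt_of_le_of_ne (hx0 i hiA) (Ne.symm hix.1)
    have hxi1 : x i < 1 := lt_of_le_of_ne (hx1 i hiA) hix.2
    have hxj0 : 0 < x j := lt_of_le_of_ne (hx0 j hjA) (Ne.symm hjx.1)
    have hxj1 : x j < 1 := lt_of_le_of_ne (hx1 j hjA) hjx.2
    set t1 := min (x i) (1 - x j) with ht1
    set t2 := min (1 - x i) (x j) with ht2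
    have ht1p : 0 < t1 := lt_min hxi0 (by linarith)
    have ht2p : 0 < t2 := lt_min (by linarith) hxj0
    have ht1a : t1 ≤ x i := min_le_left _ _
    have ht1b : t1 ≤ 1 - x j := min_le_right _ _
    have ht2a : t2 ≤ 1 - x i := min_le_left _ _
    have ht2b : t2 ≤ x j := min_le_right _ _
    set y := fun l => if l = i then x i - t1 else if l = j then x j + t1 else x l with hy
    set z := fun l => if l = i then x i + t2 else if l = j then x j - t2 else x l with hz
    have hyi : y i = x i - t1 := by simp [hy]
    have hyj : y j = x j + t1 := by simp [hy, hji]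
    have hyo : ∀ l, l ≠ i → l ≠ j → y l = x l := by intro l h1 h2; simp [hy, h1, h2]
    have hzi : z i = x i + t2 := by simp [hz]
    have hzj : z j = x j - t2 := by simp [hz, hji]
    have hzo : ∀ l, l ≠ i → l ≠ j → z l = x l := by intro l h1 h2; simp [hz, h1, h2]
    -- bounds for y and z
    have hy0 : ∀ l ∈ A, 0 ≤ y l := by
      intro l hl
      by_cases h1 : l = i
      · subst h1; rw [hyi]; linarith
      by_cases h2 : l = j
      · subst h2; rw [hyj]; linarith
      · rw [hyo l h1 h2]; exact hx0 l hl
    have hy1 : ∀ l ∈ A, y l ≤ 1 := by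
      intro l hl
      by_cases h1 : l = i
      · subst h1; rw [hyi]; linarith
      by_cases h2 : l = j
      · subst h2; rw [hyj]; linarith
      · rw [hyo l h1 h2]; exact hx1 l hl
    have hz0 : ∀ l ∈ A, 0 ≤ z l := by
      intro l hl
      by_cases h1 : l = i
      · subst h1; rw [hzi]; linarith
      by_cases h2 : l = j
      · subst h2; rw [hzj]; linarith
      · rw [hzo l h1 h2]; exact hx0 l hl
    have hz1 : ∀ l ∈ A, z l ≤ 1 := by
      intro l hl
      by_cases h1 : l = i
      · subst h1; rw [hzi]; linarith
      by_cases h2 : l = j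
      · subst h2; rw [hzj]; linarith
      · rw [hzo l h1 h2]; exact hx1 l hl
    -- sums preserved
    have hsum_aux : ∀ u : ℕ → ℝ, u i + (u j + ∑ l ∈ (A.erase i).erase j, u l) = ∑ l ∈ A, u l := by
      intro u
      rw [Finset.add_sum_erase _ u (Finset.mem_erase.2 ⟨hji, hjA⟩),
          Finset.add_sum_erase _ u hiA]
    have hyz_eq : ∀ l ∈ (A.erase i).erase j, y l = x l := by
      intro l hl
      exact hyo l (Finset.ne_of_mem_erase (Finset.mem_of_mem_erase hl)) (Finset.ne_of_mem_erase hl)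
    have hzx_eq : ∀ l ∈ (A.erase i).erase j, z l = x l := by
      intro l hl
      exact hzo l (Finset.ne_of_mem_erase (Finset.mem_of_mem_erase hl)) (Finset.ne_of_mem_erase hl)
    have hysum : ∑ l ∈ A, y l = (k : ℝ) := by
      rw [← hsum_aux y, hyi, hyj, Finset.sum_congr rfl hyz_eq, ← hsum, ← hsum_aux x]
      ring
    have hzsum : ∑ l ∈ A, z l = (k : ℝ) := by
      rw [← hsum_aux z, hzi, hzj, Finset.sum_congr rfl hzx_eq, ← hsum, ← hsum_aux x]
      ring
    -- fractional counts decrease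
    have hfsub : ∀ u : ℕ → ℝ, (∀ l, l ≠ i → l ≠ j → u l = x l) →
        A.filter (fun l => u l ≠ 0 ∧ u l ≠ 1) ⊆ A.filter (fun l => x l ≠ 0 ∧ x l ≠ 1) := by
      intro u hu S hS
      rw [mem_filter] at hS ⊢
      refine ⟨hS.1, ?_⟩
      by_cases h1 : S = i
      · subst h1; exact hix
      by_cases h2 : S = j
      · subst h2; exact hjx
      · rw [← hu S h1 h2]; exact hS.2
    have hycard : (A.filter (fun l => y l ≠ 0 ∧ y l ≠ 1)).card < d := by
      rw [← hd]
      apply Finset.card_lt_card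
      rw [Finset.ssubset_iff_of_subset (hfsub y hyo)]
      rcases le_total (x i) (1 - x j) with h | h
      · refine ⟨i, hi, ?_⟩
        have : y i = 0 := by rw [hyi, ht1, min_eq_left h]; ring
        simp [mem_filter, this]
      · refine ⟨j, hjm, ?_⟩
        have : y j = 1 := by rw [hyj, ht1, min_eq_right h]; ring
        simp [mem_filter, this]
    have hzcard : (A.filter (fun l => z l ≠ 0 ∧ z l ≠ 1)).card < d := by
      rw [← hd]
      apply Finset.card_lt_card
      rw [Finset.ssubset_iff_of_subset (hfsub z hzo)]
      rcases le_total (1 - x i) (x j) with h | h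
      · refine ⟨i, hi, ?_⟩
        have : z i = 1 := by rw [hzi, ht2, min_eq_left h]; ring
        simp [mem_filter, this]
      · refine ⟨j, hjm, ?_⟩
        have : z j = 0 := by rw [hzj, ht2, min_eq_right h]; ring
        simp [mem_filter, this]
    obtain ⟨wy, hwy0, hwys, hwyt, hwym⟩ := IH _ hycard y rfl hy0 hy1 hysum
    obtain ⟨wz, hwz0, hwzs, hwzt, hwzm⟩ := IH _ hzcard z rfl hz0 hz1 hzsum
    set lam := t2 / (t1 + t2) with hlam
    have htsum : 0 < t1 + t2 := by linarith
    have hlam0 : 0 ≤ lam := le_of_lt (div_pos ht2p htsum)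
    have hlam1 : 1 - lam = t1 / (t1 + t2) := by
      rw [hlam]; field_simp; ring
    have hlam1' : 0 ≤ 1 - lam := by rw [hlam1]; positivity
    refine ⟨fun S => lam * wy S + (1 - lam) * wz S, ?_, ?_, ?_, ?_⟩
    · intro S; dsimp only
      have h1 := mul_nonneg hlam0 (hwy0 S)
      have h2 := mul_nonneg hlam1' (hwz0 S)
      linarith
    · intro S hS
      dsimp only at hS
      by_cases h1 : wy S ≠ 0
      · exact hwys S h1
      · push_neg at h1
        apply hwzs S
        intro h2
        apply hS
        rw [h1, h2]; ring
    · have : ∑ S ∈ A.powerset, (lam * wy S + (1 - lam) * wz S)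
          = lam * (∑ S ∈ A.powerset, wy S) + (1 - lam) * (∑ S ∈ A.powerset, wz S) := by
        rw [Finset.sum_add_distrib, Finset.mul_sum, Finset.mul_sum]
      rw [this, hwyt, hwzt]; ring
    · intro l hl
      have : ∑ S ∈ A.powerset.filter (fun S => l ∈ S), (lam * wy S + (1 - lam) * wz S)
          = lam * (∑ S ∈ A.powerset.filter (fun S => l ∈ S), wy S)
            + (1 - lam) * (∑ S ∈ A.powerset.filter (fun S => l ∈ S), wz S) := by
        rw [Finset.sum_add_distrib, Finset.mul_sum, Finset.mul_sum]
      rw [this, hwym l hl, hwzm l hl]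
      have hlamt : lam * t1 = (1 - lam) * t2 := by
        rw [hlam1, hlam]; ring
      by_cases h1 : l = i
      · subst h1; rw [hyi, hzi]; linear_combination -hlamt
      by_cases h2 : l = j
      · subst h2; rw [hyj, hzj]; linear_combination hlamt
      · rw [hyo l h1 h2, hzo l h1 h2]; ring

/-- feasible marginals can be realized by a persuasive straightforward
signaling scheme that recommends ∅ when θ = 0. -/
theorem stmt5 (N : ℕ) (hN : 1 ≤ N) (F r : ℕ → ℝ)
    (hFnn : ∀ n, n ≤ N → 0 ≤ F n) (hF01 : F 0 = F 1)
    (hFmono : ∀ n, n + 1 ≤ N → F (n + 1) ≤ F n)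
    (hr0 : r 0 = 0) (hrnn : ∀ i, i ≤ N → 0 ≤ r i)
    (hrmono : ∀ i, i + 1 ≤ N → r i ≤ r (i + 1))
    (μ1 : ℝ) (hμ0 : 0 < μ1) (hμ1 : μ1 < 1)
    (p : ℕ → ℕ → ℝ)
    (hpos : ∀ i ∈ Icc 1 N, ∀ k ∈ Icc 1 N, 0 < p i k)
    (hM : ∀ i ∈ Icc 1 N, 0 ≤ ∑ k ∈ Icc 1 N, p i k * (F k - r i))
    (hS : ∀ i ∈ Icc 1 N,
      ∑ k ∈ Icc 1 (N - 1),
          ((1 / (k : ℝ)) * (∑ j ∈ Icc 1 N, p j k) - p i k) * (F (k + 1) - r i) +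
        (1 - ∑ k ∈ Icc 1 N, (1 / (k : ℝ)) * ∑ j ∈ Icc 1 N, p j k) * (F 1 - r i)
        ≤ ((1 - μ1) / μ1) * r i)
    (hC : ∑ k ∈ Icc 1 N, (1 / (k : ℝ)) * ∑ i ∈ Icc 1 N, p i k ≤ 1)
    (hV : ∀ i ∈ Icc 1 N, ∀ k ∈ Icc 1 N, (k : ℝ) * p i k ≤ ∑ j ∈ Icc 1 N, p j k) :
    ∃ φ : ℕ → Finset ℕ → ℝ,
      IsScheme N φ ∧ Persuasive N F r μ1 φ ∧ φ 0 ∅ = 1 ∧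
      ∀ i ∈ Icc 1 N, ∀ k ∈ Icc 1 N, pOf N φ i k = p i k := by
  classical
  obtain ⟨M, rfl⟩ : ∃ M, N = M + 1 := ⟨N - 1, (Nat.succ_pred_eq_of_pos hN).symm⟩
  simp only [Nat.add_sub_cancel] at hS
  set N := M + 1 with hNdef
  -- abbreviate q k
  set q : ℕ → ℝ := fun k => (1 / (k : ℝ)) * ∑ j ∈ Icc 1 N, p j k with hqdef
  have hqk : ∀ k : ℕ, (1 / (k : ℝ)) * ∑ j ∈ Icc 1 N, p j k = q k := fun k => rfl
  simp only [hqk] at hS hC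
  have hne : (Icc 1 N).Nonempty := ⟨1, mem_Icc.2 ⟨le_refl 1, hN⟩⟩
  have hkpos : ∀ k ∈ Icc 1 N, (0:ℝ) < k := by
    intro k hk
    have := (mem_Icc.1 hk).1
    exact_mod_cast Nat.lt_of_lt_of_le Nat.zero_lt_one this
  have hqpos : ∀ k ∈ Icc 1 N, 0 < q k := by
    intro k hk
    have hsum : 0 < ∑ j ∈ Icc 1 N, p j k :=
      Finset.sum_pos (fun j hj => hpos j hj k hk) hne
    exact mul_pos (one_div_pos.2 (hkpos k hk)) hsum
  have hkq : ∀ k ∈ Icc 1 N, ∑ j ∈ Icc 1 N, p j k = (k:ℝ) * q k := by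
    intro k hk
    have hk0 : (k:ℝ) ≠ 0 := ne_of_gt (hkpos k hk)
    rw [← hqk k, ← mul_assoc, mul_one_div, div_self hk0, one_mul]
  have hple : ∀ i ∈ Icc 1 N, ∀ k ∈ Icc 1 N, p i k ≤ q k := by
    intro i hi k hk
    have h1 := hV i hi k hk
    rw [hkq k hk] at h1
    exact le_of_mul_le_mul_left h1 (hkpos k hk)
  -- the conditional distributions on k-subsets
  have H : ∀ k ∈ Icc 1 N, ∃ w : Finset ℕ → ℝ, (∀ S, 0 ≤ w S) ∧
      (∀ S, w S ≠ 0 → S ∈ (Icc 1 N).powerset ∧ S.card = k) ∧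
      (∑ S ∈ (Icc 1 N).powerset, w S = 1) ∧
      (∀ i ∈ Icc 1 N, ∑ S ∈ (Icc 1 N).powerset.filter (fun S => i ∈ S), w S
        = p i k / q k) := by
    intro k hk
    apply hyper (Icc 1 N) k _ (fun i => p i k / q k) rfl
    · intro i hi
      exact div_nonneg (le_of_lt (hpos i hi k hk)) (le_of_lt (hqpos k hk))
    · intro i hi
      rw [div_le_one (hqpos k hk)]
      exact hple i hi k hk
    · rw [← Finset.sum_div, hkq k hk, mul_div_assoc,
        div_self (ne_of_gt (hqpos k hk)), mul_one]
  choose! w hw0 hws hwt hwm using H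
  have hwempty : ∀ k ∈ Icc 1 N, w k ∅ = 0 := by
    intro k hk
    by_contra h
    have h2 := (hws k hk ∅ h).2
    simp only [Finset.card_empty] at h2
    have hk1 := (mem_Icc.1 hk).1
    omega
  have hNmem : N ∈ Icc 1 N := mem_Icc.2 ⟨hN, le_refl N⟩
  -- p i N = q N for all i
  have hpN : ∀ i ∈ Icc 1 N, p i N = q N := by
    intro i hi
    have hcard : (Icc 1 N).card = N := by rw [Nat.card_Icc]; omega
    have hsum0 : ∑ j ∈ Icc 1 N, (1 - p j N / q N) = 0 := by
      rw [Finset.sum_sub_distrib, Finset.sum_const, ← Finset.sum_div, hkq N hNmem,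
        mul_div_assoc, div_self (ne_of_gt (hqpos N hNmem)), mul_one, hcard]
      simp
    have hnn : ∀ j ∈ Icc 1 N, 0 ≤ 1 - p j N / q N := by
      intro j hj
      have := (div_le_one (hqpos N hNmem)).2 (hple j hj N hNmem)
      linarith
    have h0 := (Finset.sum_eq_zero_iff_of_nonneg hnn).1 hsum0 i hi
    have h1 : p i N / q N = 1 := by linarith
    exact (div_eq_one_iff_eq (ne_of_gt (hqpos N hNmem))).1 h1
  -- the scheme
  set Φ : ℕ → Finset ℕ → ℝ := fun θ S =>
    if θ = 1 then
      (if S = ∅ then 1 - ∑ k ∈ Icc 1 N, q k else 0) + ∑ k ∈ Icc 1 N, q k * w k S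
    else (if S = ∅ then 1 else 0) with hΦ
  have hΦ0 : ∀ S : Finset ℕ, Φ 0 S = (if S = ∅ then 1 else 0) := by
    intro S; rw [hΦ]; norm_num
  have hΦ1 : ∀ S : Finset ℕ,
      Φ 1 S = (if S = ∅ then 1 - ∑ k ∈ Icc 1 N, q k else 0)
        + ∑ k ∈ Icc 1 N, q k * w k S := by
    intro S; rw [hΦ]; norm_num
  -- weighted-sum identities
  have hkey1 : ∀ k ∈ Icc 1 N, ∀ i ∈ Icc 1 N, ∀ g : ℕ → ℝ,
      ∑ S ∈ (Icc 1 N).powerset.filter (fun S => i ∈ S), w k S * g S.card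
        = (p i k / q k) * g k := by
    intro k hk i hi g
    have hc : ∀ S ∈ (Icc 1 N).powerset.filter (fun S => i ∈ S),
        w k S * g S.card = w k S * g k := by
      intro S hSm
      by_cases h : w k S = 0
      · rw [h]; ring
      · rw [(hws k hk S h).2]
    rw [Finset.sum_congr rfl hc, ← Finset.sum_mul, hwm k hk i hi]
  have hkeyT : ∀ k ∈ Icc 1 N, ∀ g : ℕ → ℝ,
      ∑ S ∈ (Icc 1 N).powerset, w k S * g S.card = g k := by
    intro k hk g
    have hc : ∀ S ∈ (Icc 1 N).powerset, w k S * g S.card = w k S * g k := by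
      intro S hSm
      by_cases h : w k S = 0
      · rw [h]; ring
      · rw [(hws k hk S h).2]
    rw [Finset.sum_congr rfl hc, ← Finset.sum_mul, hwt k hk, one_mul]
  have hkey2 : ∀ k ∈ Icc 1 N, ∀ i ∈ Icc 1 N, ∀ g : ℕ → ℝ,
      ∑ S ∈ (Icc 1 N).powerset.filter (fun S => i ∉ S), w k S * g S.card
        = (1 - p i k / q k) * g k := by
    intro k hk i hi g
    have hsplit := Finset.sum_filter_add_sum_filter_not (Icc 1 N).powerset
      (fun S => i ∈ S) (fun S => w k S * g S.card)
    have h1 := hkey1 k hk i hi g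
    have hT := hkeyT k hk g
    rw [h1, hT] at hsplit
    rw [sub_mul, one_mul]
    linarith
  -- marginals of Φ
  have hpOf : ∀ i ∈ Icc 1 N, ∀ k ∈ Icc 1 N,
      ∑ S ∈ (Icc 1 N).powerset.filter (fun S => i ∈ S ∧ S.card = k), Φ 1 S
        = p i k := by
    intro i hi k hk
    have hstep1 : ∀ S ∈ (Icc 1 N).powerset.filter (fun S => i ∈ S ∧ S.card = k),
        Φ 1 S = ∑ k' ∈ Icc 1 N, q k' * w k' S := by
      intro S hSm
      have hiS : i ∈ S := (mem_filter.1 hSm).2.1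
      rw [hΦ1 S, if_neg (Finset.ne_empty_of_mem hiS), zero_add]
    rw [Finset.sum_congr rfl hstep1, Finset.sum_comm]
    have hzero : ∀ k' ∈ Icc 1 N, k' ≠ k →
        ∑ S ∈ (Icc 1 N).powerset.filter (fun S => i ∈ S ∧ S.card = k),
          q k' * w k' S = 0 := by
      intro k' hk' hne'
      apply Finset.sum_eq_zero
      intro S hSm
      by_cases h : w k' S = 0
      · rw [h]; ring
      · exfalso
        have hc := (hws k' hk' S h).2
        have hck := (mem_filter.1 hSm).2.2
        exact hne' (by rw [← hc, hck])
    rw [Finset.sum_eq_single_of_mem k hk hzero]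
    have hsub : ∑ S ∈ (Icc 1 N).powerset.filter (fun S => i ∈ S ∧ S.card = k), w k S
        = p i k / q k := by
      rw [← hwm k hk i hi]
      apply Finset.sum_subset
      · intro S hSm
        rw [mem_filter] at hSm ⊢
        exact ⟨hSm.1, hSm.2.1⟩
      · intro S hSm hnot
        by_contra h
        have hc := (hws k hk S h).2
        rw [mem_filter] at hSm
        exact hnot (mem_filter.2 ⟨hSm.1, hSm.2, hc⟩)
    rw [← Finset.mul_sum, hsub, mul_div_cancel₀ _ (ne_of_gt (hqpos k hk))]
  refine ⟨Φ, ⟨?_, ?_⟩, ?_, ?_, ?_⟩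
  · -- nonnegativity
    intro θ hθ S hSm
    simp only [mem_insert, mem_singleton] at hθ
    rcases hθ with h | h <;> subst h
    · rw [hΦ0 S]; split <;> norm_num
    · rw [hΦ1 S]
      have h1 : (0:ℝ) ≤ (if S = ∅ then 1 - ∑ k ∈ Icc 1 N, q k else 0) := by
        split
        · linarith
        · exact le_refl 0
      have h2 : (0:ℝ) ≤ ∑ k ∈ Icc 1 N, q k * w k S :=
        Finset.sum_nonneg (fun k hk => mul_nonneg (le_of_lt (hqpos k hk)) (hw0 k hk S))
      linarith
  · -- sums to one
    intro θ hθ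
    simp only [mem_insert, mem_singleton] at hθ
    rcases hθ with h | h <;> subst h
    · rw [Finset.sum_congr rfl (fun S _ => hΦ0 S),
        Finset.sum_ite_eq' ((Icc 1 N).powerset) ∅ (fun _ => (1:ℝ))]
      simp [Finset.empty_mem_powerset]
    · rw [Finset.sum_congr rfl (fun S _ => hΦ1 S), Finset.sum_add_distrib,
        Finset.sum_ite_eq' ((Icc 1 N).powerset) ∅
          (fun _ => 1 - ∑ k ∈ Icc 1 N, q k), Finset.sum_comm]
      have hin : ∀ k ∈ Icc 1 N, ∑ S ∈ (Icc 1 N).powerset, q k * w k S = q k := by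
        intro k hk
        rw [← Finset.mul_sum, hwt k hk, mul_one]
      rw [Finset.sum_congr rfl hin, if_pos (Finset.empty_mem_powerset _)]
      ring
  · -- persuasiveness
    intro i hi
    constructor
    · -- move constraint
      have hT0 : ∑ S ∈ (Icc 1 N).powerset.filter (fun S => i ∈ S),
          Φ 0 S * ((0:ℝ) * F S.card - r i) = 0 := by
        apply Finset.sum_eq_zero
        intro S hSm
        have hiS : i ∈ S := (mem_filter.1 hSm).2
        rw [hΦ0 S, if_neg (Finset.ne_empty_of_mem hiS)]; ring
      have hT1 : ∑ S ∈ (Icc 1 N).powerset.filter (fun S => i ∈ S),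
          Φ 1 S * ((1:ℝ) * F S.card - r i)
          = ∑ k ∈ Icc 1 N, p i k * (F k - r i) := by
        have hstep : ∀ S ∈ (Icc 1 N).powerset.filter (fun S => i ∈ S),
            Φ 1 S * ((1:ℝ) * F S.card - r i)
            = ∑ k ∈ Icc 1 N, q k * (w k S * (F S.card - r i)) := by
          intro S hSm
          have hiS : i ∈ S := (mem_filter.1 hSm).2
          rw [hΦ1 S, if_neg (Finset.ne_empty_of_mem hiS), zero_add, Finset.sum_mul]
          apply Finset.sum_congr rfl
          intro k _; ring
        rw [Finset.sum_congr rfl hstep, Finset.sum_comm]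
        apply Finset.sum_congr rfl
        intro k hk
        rw [← Finset.mul_sum]
        have h := hkey1 k hk i hi (fun c => F c - r i)
        rw [h, show q k * (p i k / q k * (F k - r i))
            = (q k / q k) * (p i k * (F k - r i)) from by ring,
          div_self (ne_of_gt (hqpos k hk)), one_mul]
      rw [hT0, hT1]
      have h1 := mul_nonneg (le_of_lt hμ0) (hM i hi)
      linarith
    · -- stay constraint
      have hemp : (∅ : Finset ℕ) ∈ (Icc 1 N).powerset.filter (fun S => i ∉ S) :=
        mem_filter.2 ⟨Finset.empty_mem_powerset _, Finset.notMem_empty i⟩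
      have hT0 : ∑ S ∈ (Icc 1 N).powerset.filter (fun S => i ∉ S),
          Φ 0 S * ((0:ℝ) * F (S.card + 1) - r i) = - r i := by
        have hstep : ∀ S ∈ (Icc 1 N).powerset.filter (fun S => i ∉ S),
            Φ 0 S * ((0:ℝ) * F (S.card + 1) - r i)
            = (if S = ∅ then (0:ℝ) * F (S.card + 1) - r i else 0) := by
          intro S _
          rw [hΦ0 S]
          by_cases h : S = ∅ <;> simp [h]
        rw [Finset.sum_congr rfl hstep,
          Finset.sum_ite_eq' _ ∅ (fun S : Finset ℕ => (0:ℝ) * F (S.card + 1) - r i),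
          if_pos hemp]
        simp
      have hT1 : ∑ S ∈ (Icc 1 N).powerset.filter (fun S => i ∉ S),
          Φ 1 S * ((1:ℝ) * F (S.card + 1) - r i)
          = (1 - ∑ k ∈ Icc 1 N, q k) * (F 1 - r i)
            + ∑ k ∈ Icc 1 N, (q k - p i k) * (F (k + 1) - r i) := by
        have hstep : ∀ S ∈ (Icc 1 N).powerset.filter (fun S => i ∉ S),
            Φ 1 S * ((1:ℝ) * F (S.card + 1) - r i)
            = (if S = ∅ then (1 - ∑ k ∈ Icc 1 N, q k) * ((1:ℝ) * F (S.card + 1) - r i) else 0)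
              + ∑ k ∈ Icc 1 N, q k * (w k S * (F (S.card + 1) - r i)) := by
          intro S _
          rw [hΦ1 S, add_mul, Finset.sum_mul]
          congr 1
          · by_cases h : S = ∅ <;> simp [h]
          · apply Finset.sum_congr rfl
            intro k _; ring
        rw [Finset.sum_congr rfl hstep, Finset.sum_add_distrib,
          Finset.sum_ite_eq' _ ∅
            (fun S : Finset ℕ => (1 - ∑ k ∈ Icc 1 N, q k) * ((1:ℝ) * F (S.card + 1) - r i)),
          if_pos hemp, Finset.sum_comm]
        have hin : ∀ k ∈ Icc 1 N,
            ∑ S ∈ (Icc 1 N).powerset.filter (fun S => i ∉ S),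
              q k * (w k S * (F (S.card + 1) - r i))
            = (q k - p i k) * (F (k + 1) - r i) := by
          intro k hk
          rw [← Finset.mul_sum]
          have h := hkey2 k hk i hi (fun c => F (c + 1) - r i)
          rw [h, show q k * ((1 - p i k / q k) * (F (k + 1) - r i))
              = (q k - (q k / q k) * p i k) * (F (k + 1) - r i) from by ring,
            div_self (ne_of_gt (hqpos k hk)), one_mul]
        rw [Finset.sum_congr rfl hin]
        congr 1
        simp
      rw [hT0, hT1]
      have hsplitN : ∑ k ∈ Icc 1 N, (q k - p i k) * (F (k + 1) - r i)
          = ∑ k ∈ Icc 1 M, (q k - p i k) * (F (k + 1) - r i) := by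
        rw [show N = M + 1 from rfl,
          Finset.sum_Icc_succ_top (Nat.le_add_left 1 M)]
        rw [hpN i hi]
        simp only [show M + 1 = N from rfl, sub_self, zero_mul, add_zero]
      rw [hsplitN]
      have hle : (1 - ∑ k ∈ Icc 1 N, q k) * (F 1 - r i)
          + ∑ k ∈ Icc 1 M, (q k - p i k) * (F (k + 1) - r i)
          ≤ (1 - μ1) / μ1 * r i := by
        have := hS i hi
        linarith
      have h2 := mul_le_mul_of_nonneg_left hle (le_of_lt hμ0)
      have hmul : μ1 * ((1 - μ1) / μ1 * r i) = (1 - μ1) * r i := by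
        field_simp
      linarith
  · -- Φ 0 ∅ = 1
    rw [hΦ0 ∅, if_pos rfl]
  · -- marginals
    intro i hi k hk
    exact hpOf i hi k hk

end
end

section
/- If i* ∈ {0,…,N} is a maximizer of W̃ over {0,…,N}, then F(i*) ≥ r(i*). -/
open Finset

noncomputable section

/-- `W̃(n) = n·F(n) − Σ_{i=1}^n r(i)`: welfare when θ = 1 and the first `n` agents move. -/
def Wtil (F r : ℕ → ℝ) (n : ℕ) : ℝ :=
  (n : ℝ) * F n - ∑ i ∈ Icc 1 n, r i

/-! Adding the `(n+1)`-st agent changes `W̃` by its own net gain `F(n+1) − r(n+1)` minus the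
congestion loss `n·(F n − F (n+1))` it imposes on the others. When `F` is nonincreasing that loss
is nonnegative, so an increase of `W̃` at `n+1` forces `r(n+1) ≤ F(n+1)`; at `i* = 0` the claim
is `0 ≤ F 0`. -/

theorem Wtil_succ (F r : ℕ → ℝ) (n : ℕ) :
    Wtil F r (n + 1) = Wtil F r n + (F (n + 1) - r (n + 1)) - n * (F n - F (n + 1)) := by
  simp only [Wtil, sum_Icc_succ_top (Nat.le_add_left 1 n), Nat.cast_succ]
  ring

theorem Wtil_succ_le (F r : ℕ → ℝ) (n : ℕ) (hF : F (n + 1) ≤ F n) :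
    Wtil F r (n + 1) ≤ Wtil F r n + (F (n + 1) - r (n + 1)) := by
  rw [Wtil_succ]
  have : 0 ≤ (n : ℝ) * (F n - F (n + 1)) := mul_nonneg n.cast_nonneg (sub_nonneg.mpr hF)
  linarith

theorem le_of_Wtil_le_Wtil_succ (F r : ℕ → ℝ) (n : ℕ) (hF : F (n + 1) ≤ F n)
    (hW : Wtil F r n ≤ Wtil F r (n + 1)) : r (n + 1) ≤ F (n + 1) := by
  linarith [Wtil_succ_le F r n hF]

theorem stmt7_general (N : ℕ) (F r : ℕ → ℝ)
    (hFnn : ∀ n, n ≤ N → 0 ≤ F n)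
    (hFmono : ∀ n, n + 1 ≤ N → F (n + 1) ≤ F n)
    (hr0 : r 0 = 0)
    (istar : ℕ) (histar : istar ≤ N)
    (hmax : ∀ n ≤ N, Wtil F r n ≤ Wtil F r istar) :
    r istar ≤ F istar := by
  cases istar with
  | zero => simpa [hr0] using hFnn 0 N.zero_le
  | succ m => exact le_of_Wtil_le_Wtil_succ F r m (hFmono m histar) (hmax m (by omega))

/-- at any maximizer `i*` of `W̃` over `{0,…,N}`, `F(i*) ≥ r(i*)`. -/
theorem stmt7 (N : ℕ) (hN : 1 ≤ N) (F r : ℕ → ℝ)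
    (hFnn : ∀ n, n ≤ N → 0 ≤ F n) (hF01 : F 0 = F 1)
    (hFmono : ∀ n, n + 1 ≤ N → F (n + 1) ≤ F n)
    (hr0 : r 0 = 0) (hrnn : ∀ i, i ≤ N → 0 ≤ r i)
    (hrmono : ∀ i, i + 1 ≤ N → r i ≤ r (i + 1))
    (istar : ℕ) (histar : istar ≤ N)
    (hmax : ∀ n ≤ N, Wtil F r n ≤ Wtil F r istar) :
    r istar ≤ F istar :=
  stmt7_general N F r hFnn hFmono hr0 istar histar hmax

end
end

section
/- Let i* be the largest maximizer of W̃ over {0,…,N}, and suppose that either i* = N or μ(1)·F(i*+1) ≤ r(i*+1). Define the deterministic straightforward signaling scheme φ* by φ*(∅|0) = 1 and φ*({1,…,i*}|1) = 1 (all other subsets receive probability 0). Then φ* is persuasive, and its expected welfare (which equals μ(1)·W̃(i*)) is greater than or equal to the expected welfare of every persuasive straightforward signaling scheme. -/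
open Finset

noncomputable section

/-!
On the state θ = 1 the welfare of any recommended set `S` is at most `W̃(|S|)`, because the
`|S|` cheapest moving costs are those of agents `1, …, |S|`; on θ = 0 it is at most `0`. So no
scheme, persuasive or not, beats `μ(1)·W̃(i*)`, which `φ*` attains. Persuasiveness of `φ*` is
local: comparing `W̃(i*)` with `W̃(i* - 1)` and using that `F` is nonincreasing gives
`r(i) ≤ r(i*) ≤ F(i*)` for the agents told to move, while the hypothesis on `i* + 1` and the
monotonicity of `r` keep the others from moving.
-/

lemma sum_Icc_card_le_sum_of_subset {N : ℕ} {r : ℕ → ℝ} (hr : MonotoneOn r (Set.Iic N))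
    {S : Finset ℕ} (hS : S ⊆ Icc 1 N) : ∑ i ∈ Icc 1 #S, r i ≤ ∑ i ∈ S, r i := by
  induction S using Finset.induction_on_max with
  | empty => simp
  | insert a S hlt ih =>
    have haS : a ∉ S := fun h => lt_irrefl a (hlt a h)
    obtain ⟨ha1, haN⟩ := mem_Icc.1 (hS (mem_insert_self a S))
    have hcard : #S + 1 ≤ a := by
      have : S ⊆ Icc 1 (a - 1) := fun x hx =>
        mem_Icc.2 ⟨(mem_Icc.1 (hS (mem_insert_of_mem hx))).1, Nat.le_sub_one_of_lt (hlt x hx)⟩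
      have := card_le_card this
      simp only [Nat.card_Icc] at this
      omega
    rw [card_insert_of_notMem haS, sum_Icc_succ_top (by omega), sum_insert haS, add_comm (r a)]
    exact add_le_add (ih ((subset_insert a S).trans hS))
      (hr (Set.mem_Iic.2 (by omega)) (Set.mem_Iic.2 haN) hcard)

section Welfare

variable {F r : ℕ → ℝ}

lemma W_zero_nonpos {S : Finset ℕ} (hr : ∀ i ∈ S, 0 ≤ r i) : W F r 0 S ≤ 0 := by
  simpa [W] using sum_nonneg hr

lemma W_one_le_Wtil_card {N : ℕ} (hr : MonotoneOn r (Set.Iic N)) {S : Finset ℕ}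
    (hS : S ⊆ Icc 1 N) : W F r 1 S ≤ Wtil F r #S := by
  have := sum_Icc_card_le_sum_of_subset hr hS
  simp only [W, Wtil, Nat.cast_one, one_mul]
  linarith

lemma W_one_Icc (n : ℕ) : W F r 1 (Icc 1 n) = Wtil F r n := by
  simp [W, Wtil]

lemma r_succ_le_F_succ {n : ℕ} (hF : F (n + 1) ≤ F n) (h : Wtil F r n ≤ Wtil F r (n + 1)) :
    r (n + 1) ≤ F (n + 1) := by
  simp only [Wtil, sum_Icc_succ_top (Nat.le_add_left 1 n), Nat.cast_add, Nat.cast_one] at h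
  nlinarith [mul_le_mul_of_nonneg_left hF n.cast_nonneg]

end Welfare

section Schemes

variable {N : ℕ} {F r : ℕ → ℝ} {μ1 : ℝ} {φ : ℕ → Finset ℕ → ℝ}

lemma EW_le_of_W_le (hμ0 : 0 ≤ μ1) (hμ1 : μ1 ≤ 1) (hφ : IsScheme N φ) {M : ℝ}
    (h0 : ∀ S ⊆ Icc 1 N, W F r 0 S ≤ 0) (h1 : ∀ S ⊆ Icc 1 N, W F r 1 S ≤ M) :
    EW N F r μ1 φ ≤ μ1 * M := by
  obtain ⟨hnn, hsum⟩ := hφ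
  have hstate0 : ∑ S ∈ (Icc 1 N).powerset, φ 0 S * W F r 0 S ≤ 0 :=
    sum_nonpos fun S hS =>
      mul_nonpos_of_nonneg_of_nonpos (hnn 0 (by simp) S hS) (h0 S (mem_powerset.1 hS))
  have hstate1 : ∑ S ∈ (Icc 1 N).powerset, φ 1 S * W F r 1 S ≤ M :=
    calc ∑ S ∈ (Icc 1 N).powerset, φ 1 S * W F r 1 S
        ≤ ∑ S ∈ (Icc 1 N).powerset, φ 1 S * M :=
          sum_le_sum fun S hS =>
            mul_le_mul_of_nonneg_left (h1 S (mem_powerset.1 hS)) (hnn 1 (by simp) S hS)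
      _ = M := by rw [← sum_mul, hsum 1 (by simp), one_mul]
  unfold EW
  nlinarith [mul_nonpos_of_nonneg_of_nonpos (sub_nonneg.2 hμ1) hstate0,
    mul_le_mul_of_nonneg_left hstate1 hμ0]

variable {A : Finset ℕ}

lemma isScheme_of_dirac (hA : A ⊆ Icc 1 N) (hφ0 : ∀ S, φ 0 S = if S = ∅ then 1 else 0)
    (hφ1 : ∀ S, φ 1 S = if S = A then 1 else 0) : IsScheme N φ := by
  refine ⟨fun θ hθ S _ => ?_, fun θ hθ => ?_⟩ <;> simp only [mem_insert, mem_singleton] at hθ <;>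
    rcases hθ with rfl | rfl <;> simp [hφ0, hφ1, hA, apply_ite]

lemma EW_of_dirac (hA : A ⊆ Icc 1 N) (hφ0 : ∀ S, φ 0 S = if S = ∅ then 1 else 0)
    (hφ1 : ∀ S, φ 1 S = if S = A then 1 else 0) : EW N F r μ1 φ = μ1 * W F r 1 A := by
  simp [EW, hφ0, hφ1, hA, W]

lemma persuasive_of_dirac (hA : A ⊆ Icc 1 N) (hμ0 : 0 ≤ μ1) (hμ1 : μ1 ≤ 1)
    (hφ0 : ∀ S, φ 0 S = if S = ∅ then 1 else 0) (hφ1 : ∀ S, φ 1 S = if S = A then 1 else 0)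
    (hr : ∀ i ∈ A, 0 ≤ r i) (hmove : ∀ i ∈ A, r i ≤ F #A)
    (hstay : ∀ i ∈ Icc 1 N, i ∉ A → μ1 * F (#A + 1) ≤ r i) :
    Persuasive N F r μ1 φ := by
  intro i hi
  simp only [hφ0, hφ1, ite_mul, one_mul, zero_mul, sum_ite_eq', mem_filter, mem_powerset,
    empty_subset, hA, true_and, notMem_empty, not_false_eq_true, if_true, if_false]
  by_cases hiA : i ∈ A
  · simp only [hiA, if_true, not_true_eq_false, if_false]
    exact ⟨by nlinarith [hmove i hiA], by nlinarith [hr i hiA]⟩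
  · simp only [hiA, if_true, not_false_eq_true, if_false]
    exact ⟨by simp, by nlinarith [hstay i hi hiA]⟩

end Schemes

theorem stmt9_general (N : ℕ) (F r : ℕ → ℝ)
    (hFmono : ∀ n, n + 1 ≤ N → F (n + 1) ≤ F n)
    (hrnn : ∀ i, i ≤ N → 0 ≤ r i)
    (hrmono : ∀ i, i + 1 ≤ N → r i ≤ r (i + 1))
    (μ1 : ℝ) (hμ0 : 0 < μ1) (hμ1 : μ1 < 1)
    (istar : ℕ) (histar : istar ≤ N)
    (hmax : ∀ n ≤ N, Wtil F r n ≤ Wtil F r istar)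
    (hcond : istar = N ∨ μ1 * F (istar + 1) ≤ r (istar + 1))
    (φstar : ℕ → Finset ℕ → ℝ)
    (hφ0 : ∀ S : Finset ℕ, φstar 0 S = if S = ∅ then 1 else 0)
    (hφ1 : ∀ S : Finset ℕ, φstar 1 S = if S = Icc 1 istar then 1 else 0) :
    IsScheme N φstar ∧ Persuasive N F r μ1 φstar ∧
      EW N F r μ1 φstar = μ1 * Wtil F r istar ∧
      ∀ φ : ℕ → Finset ℕ → ℝ, IsScheme N φ → Persuasive N F r μ1 φ →
        EW N F r μ1 φ ≤ EW N F r μ1 φstar := by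
  have hr : MonotoneOn r (Set.Iic N) :=
    monotoneOn_of_le_add_one Set.ordConnected_Iic fun i _ _ hi => hrmono i hi
  have hA : Icc 1 istar ⊆ Icc 1 N := Icc_subset_Icc_right histar
  have hEW : EW N F r μ1 φstar = μ1 * Wtil F r istar := by
    rw [EW_of_dirac hA hφ0 hφ1, W_one_Icc]
  have hmove : ∀ i ∈ Icc 1 istar, r i ≤ F #(Icc 1 istar) := by
    intro i hi
    obtain ⟨hi1, hi⟩ := mem_Icc.1 hi
    obtain ⟨m, rfl⟩ : ∃ m, istar = m + 1 := ⟨istar - 1, by omega⟩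
    rw [Nat.card_Icc, Nat.add_sub_cancel]
    exact (hr (Set.mem_Iic.2 (hi.trans histar)) (Set.mem_Iic.2 histar) hi).trans
      (r_succ_le_F_succ (hFmono m histar) (hmax m (by omega)))
  have hstay : ∀ i ∈ Icc 1 N, i ∉ Icc 1 istar → μ1 * F (#(Icc 1 istar) + 1) ≤ r i := by
    intro i hi hiA
    obtain ⟨hi1, hiN⟩ := mem_Icc.1 hi
    have hlt : istar < i := lt_of_not_ge fun h => hiA (mem_Icc.2 ⟨hi1, h⟩)
    rw [Nat.card_Icc, Nat.add_sub_cancel]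
    exact (hcond.resolve_left (by omega)).trans (hr (Set.mem_Iic.2 (by omega)) hiN hlt)
  refine ⟨isScheme_of_dirac hA hφ0 hφ1,
    persuasive_of_dirac hA hμ0.le hμ1.le hφ0 hφ1
      (fun i hi => hrnn i (mem_Icc.1 (hA hi)).2) hmove hstay, hEW, fun φ hφ _ => ?_⟩
  rw [hEW]
  exact EW_le_of_W_le hμ0.le hμ1.le hφ
    (fun S hS => W_zero_nonpos fun i hi => hrnn i (mem_Icc.1 (hS hi)).2)
    (fun S hS => (W_one_le_Wtil_card hr hS).trans (hmax #S (by simpa using card_le_card hS)))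

/-- if `i*` is the largest maximizer of `W̃` and either `i* = N` or
`μ(1)·F(i*+1) ≤ r(i*+1)`, then the deterministic scheme recommending ∅ at θ = 0 and
`{1,…,i*}` at θ = 1 is persuasive and optimal among persuasive schemes. -/
theorem stmt9 (N : ℕ) (hN : 1 ≤ N) (F r : ℕ → ℝ)
    (hFnn : ∀ n, n ≤ N → 0 ≤ F n) (hF01 : F 0 = F 1)
    (hFmono : ∀ n, n + 1 ≤ N → F (n + 1) ≤ F n)
    (hr0 : r 0 = 0) (hrnn : ∀ i, i ≤ N → 0 ≤ r i)
    (hrmono : ∀ i, i + 1 ≤ N → r i ≤ r (i + 1))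
    (μ1 : ℝ) (hμ0 : 0 < μ1) (hμ1 : μ1 < 1)
    (istar : ℕ) (histar : istar ≤ N)
    (hmax : ∀ n ≤ N, Wtil F r n ≤ Wtil F r istar)
    (hlargest : ∀ n ≤ N, Wtil F r n = Wtil F r istar → n ≤ istar)
    (hcond : istar = N ∨ μ1 * F (istar + 1) ≤ r (istar + 1))
    (φstar : ℕ → Finset ℕ → ℝ)
    (hφ0 : ∀ S : Finset ℕ, φstar 0 S = if S = ∅ then 1 else 0)
    (hφ1 : ∀ S : Finset ℕ, φstar 1 S = if S = Icc 1 istar then 1 else 0) :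
    IsScheme N φstar ∧ Persuasive N F r μ1 φstar ∧
      EW N F r μ1 φstar = μ1 * Wtil F r istar ∧
      ∀ φ : ℕ → Finset ℕ → ℝ, IsScheme N φ → Persuasive N F r μ1 φ →
        EW N F r μ1 φ ≤ EW N F r μ1 φstar :=
  stmt9_general N F r hFmono hrnn hrmono μ1 hμ0 hμ1 istar histar hmax hcond φstar hφ0 hφ1

end
end

section
/- Suppose q > 0 and F is strictly decreasing on {1,…,N}, i.e., F(n) > F(n+1) for 1 ≤ n ≤ N−1. Let p be a Bayes–Nash equilibrium at belief q, and let i < j be two agents with 0 < p_i < 1 and 0 < p_j < 1. Then p_i ≤ p_j. -/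
open Finset

noncomputable section

open scoped Classical

/-- Agent `i`'s expected utility for moving, when the other agents `{1,…,N}∖{i}`
independently move with probabilities `p j` and the common belief that θ = 1 is `q`. -/
def moveUtil (N : ℕ) (F r : ℕ → ℝ) (q : ℝ) (p : ℕ → ℝ) (i : ℕ) : ℝ :=
  q * ∑ T ∈ ((Icc 1 N).erase i).powerset,
      (∏ j ∈ T, p j) * (∏ j ∈ ((Icc 1 N).erase i) \ T, (1 - p j)) * F (T.card + 1)
    - r i

/-- A Bayes–Nash equilibrium at common belief `q`: a profile `p ∈ [0,1]^N` such that
any agent with strictly positive (resp. negative) utility for moving moves (stays)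
with probability one. -/
def IsBNE (N : ℕ) (F r : ℕ → ℝ) (q : ℝ) (p : ℕ → ℝ) : Prop :=
  (∀ i ∈ Icc 1 N, 0 ≤ p i ∧ p i ≤ 1) ∧
  ∀ i ∈ Icc 1 N,
    (0 < moveUtil N F r q p i → p i = 1) ∧
    (moveUtil N F r q p i < 0 → p i = 0)

/-- `i_ub(q) = max{ i ∈ {0,…,N} : q·F(i) − r(i) ≥ 0 }` (the junk value 0 if empty). -/
def iUB (N : ℕ) (F r : ℕ → ℝ) (q : ℝ) : ℕ :=
  ((range (N + 1)).filter (fun i => 0 ≤ q * F i - r i)).sup id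

/-- `i_lb(q) = max{ i ∈ {0,…,N} : q·F(i) − r(i) > 0 }`, with value 0 if empty. -/
def iLB (N : ℕ) (F r : ℕ → ℝ) (q : ℝ) : ℕ :=
  ((range (N + 1)).filter (fun i => 0 < q * F i - r i)).sup id

/-!
Conditioning on the movers among the agents other than `i` and `j`, each of the two
utilities is affine in the other one's probability,
`u_i = q·((1 - p_j)·B + p_j·A) - r_i` and `u_j = q·((1 - p_i)·B + p_i·A) - r_j`,
where `B` and `A` are the expectations of `F(X + 1)` and `F(X + 2)` for the number `X` of
movers among the others, and `A < B` because `F` strictly decreases. Hence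
`u_i - u_j = q·(p_i - p_j)·(B - A) + r_j - r_i`; since `p_i < 1` forces `u_i ≤ 0`,
`p_j > 0` forces `u_j ≥ 0`, and `r_i ≤ r_j`, this is `≤ 0` only if `p_i ≤ p_j`.
-/

section PoissonBinomial

variable {ι R : Type*} [DecidableEq ι]

/-- The probability that, among independent trials indexed by `S` with success probabilities
`p`, exactly the trials in `T` succeed. -/
def poissonBinomialWeight [CommRing R] (p : ι → R) (S T : Finset ι) : R :=
  (∏ k ∈ T, p k) * ∏ k ∈ S \ T, (1 - p k)

def poissonBinomialExpect [CommRing R] (p : ι → R) (S : Finset ι) (g : ℕ → R) : R :=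
  ∑ T ∈ S.powerset, poissonBinomialWeight p S T * g T.card

theorem sum_poissonBinomialWeight [CommRing R] (p : ι → R) (S : Finset ι) :
    ∑ T ∈ S.powerset, poissonBinomialWeight p S T = 1 := by
  simp only [poissonBinomialWeight, ← prod_add, add_sub_cancel, prod_const_one]

theorem poissonBinomialExpect_insert [CommRing R] (p : ι → R) {S : Finset ι} {x : ι}
    (hx : x ∉ S) (g : ℕ → R) :
    poissonBinomialExpect p (insert x S) g =
      (1 - p x) * poissonBinomialExpect p S g
        + p x * poissonBinomialExpect p S (fun n => g (n + 1)) := by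
  simp only [poissonBinomialExpect, sum_powerset_insert hx, mul_sum]
  congr 1 <;> refine sum_congr rfl fun T hT => ?_
  all_goals
    have hxT : x ∉ T := fun h => hx (mem_powerset.mp hT h)
    simp only [poissonBinomialWeight]
  · rw [insert_sdiff_of_notMem S hxT, prod_insert (by simp [hx])]
    ring
  · rw [insert_sdiff_insert, sdiff_insert_of_notMem hx, prod_insert hxT,
      card_insert_of_notMem hxT]
    ring

theorem poissonBinomialExpect_of_mem [CommRing R] (p : ι → R) {S : Finset ι} {x : ι}
    (hx : x ∈ S) (g : ℕ → R) :
    poissonBinomialExpect p S g =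
      (1 - p x) * poissonBinomialExpect p (S.erase x) g
        + p x * poissonBinomialExpect p (S.erase x) (fun n => g (n + 1)) := by
  conv_lhs => rw [← insert_erase hx]
  exact poissonBinomialExpect_insert p (notMem_erase x S) g

variable [CommRing R] [LinearOrder R] [IsStrictOrderedRing R]

theorem poissonBinomialWeight_nonneg {p : ι → R} {S : Finset ι}
    (hp : ∀ k ∈ S, 0 ≤ p k ∧ p k ≤ 1) {T : Finset ι} (hT : T ⊆ S) :
    0 ≤ poissonBinomialWeight p S T :=
  mul_nonneg (prod_nonneg fun k hk => (hp k (hT hk)).1)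
    (prod_nonneg fun k hk => sub_nonneg.mpr (hp k (mem_sdiff.mp hk).1).2)

theorem poissonBinomialExpect_lt_poissonBinomialExpect {p : ι → R} {S : Finset ι}
    (hp : ∀ k ∈ S, 0 ≤ p k ∧ p k ≤ 1) {g h : ℕ → R} (hgh : ∀ n ≤ S.card, g n < h n) :
    poissonBinomialExpect p S g < poissonBinomialExpect p S h := by
  have hgh' : ∀ T ∈ S.powerset, g T.card < h T.card := fun T hT =>
    hgh _ (card_le_card (mem_powerset.mp hT))
  obtain ⟨T, hT, hwT⟩ : ∃ T ∈ S.powerset, 0 < poissonBinomialWeight p S T :=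
    exists_lt_of_sum_lt (by simp [sum_poissonBinomialWeight])
  refine sum_lt_sum (fun T hT => ?_) ⟨T, hT, mul_lt_mul_of_pos_left (hgh' T hT) hwT⟩
  exact mul_le_mul_of_nonneg_left (hgh' T hT).le
    (poissonBinomialWeight_nonneg hp (mem_powerset.mp hT))

end PoissonBinomial

theorem le_of_forall_le_succ_of_le {α : Type*} [Preorder α] {f : ℕ → α} {N : ℕ}
    (hf : ∀ n, n + 1 ≤ N → f n ≤ f (n + 1)) {a b : ℕ} (hab : a ≤ b) (hb : b ≤ N) :
    f a ≤ f b := by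
  induction b, hab using Nat.le_induction with
  | base => rfl
  | succ b _ ih => exact (ih (by omega)).trans (hf b hb)

theorem moveUtil_eq_poissonBinomialExpect (N : ℕ) (F r : ℕ → ℝ) (q : ℝ) (p : ℕ → ℝ) (i : ℕ) :
    moveUtil N F r q p i =
      q * poissonBinomialExpect p ((Icc 1 N).erase i) (fun n => F (n + 1)) - r i :=
  rfl

theorem moveUtil_eq_of_ne {N : ℕ} (F r : ℕ → ℝ) (q : ℝ) (p : ℕ → ℝ) {i j : ℕ}
    (hj : j ∈ Icc 1 N) (hij : i ≠ j) :
    moveUtil N F r q p i =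
      q * ((1 - p j) * poissonBinomialExpect p (((Icc 1 N).erase i).erase j) (fun n => F (n + 1))
        + p j * poissonBinomialExpect p (((Icc 1 N).erase i).erase j) (fun n => F (n + 2)))
        - r i := by
  rw [moveUtil_eq_poissonBinomialExpect,
    poissonBinomialExpect_of_mem p (mem_erase.mpr ⟨hij.symm, hj⟩)]

theorem moveUtil_sub_moveUtil {N : ℕ} (F r : ℕ → ℝ) (q : ℝ) (p : ℕ → ℝ) {i j : ℕ}
    (hi : i ∈ Icc 1 N) (hj : j ∈ Icc 1 N) (hij : i ≠ j) :
    moveUtil N F r q p i - moveUtil N F r q p j =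
      q * (p i - p j) *
        (poissonBinomialExpect p (((Icc 1 N).erase i).erase j) (fun n => F (n + 1))
          - poissonBinomialExpect p (((Icc 1 N).erase i).erase j) (fun n => F (n + 2)))
        - (r i - r j) := by
  rw [moveUtil_eq_of_ne F r q p hj hij, moveUtil_eq_of_ne F r q p hi hij.symm,
    erase_right_comm (a := j)]
  ring

namespace IsBNE

variable {N : ℕ} {F r : ℕ → ℝ} {q : ℝ} {p : ℕ → ℝ} {i : ℕ}

theorem moveUtil_nonpos (h : IsBNE N F r q p) (hi : i ∈ Icc 1 N) (hpi : p i < 1) :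
    moveUtil N F r q p i ≤ 0 :=
  not_lt.mp fun hu => hpi.ne ((h.2 i hi).1 hu)

theorem moveUtil_nonneg (h : IsBNE N F r q p) (hi : i ∈ Icc 1 N) (hpi : 0 < p i) :
    0 ≤ moveUtil N F r q p i :=
  not_lt.mp fun hu => hpi.ne' ((h.2 i hi).2 hu)

end IsBNE

theorem stmt10_general (N : ℕ) (F r : ℕ → ℝ)
    (hFstrict : ∀ n, 1 ≤ n → n + 1 ≤ N → F (n + 1) < F n)
    (hrmono : ∀ i, i + 1 ≤ N → r i ≤ r (i + 1))
    (q : ℝ) (hq0 : 0 < q)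
    (p : ℕ → ℝ) (hBNE : IsBNE N F r q p)
    (i j : ℕ) (hi : i ∈ Icc 1 N) (hj : j ∈ Icc 1 N) (hij : i < j)
    (hpi1 : p i < 1) (hpj0 : 0 < p j) :
    p i ≤ p j := by
  have hi' := mem_Icc.mp hi
  have hj' := mem_Icc.mp hj
  have hAB : poissonBinomialExpect p (((Icc 1 N).erase i).erase j) (fun n => F (n + 2)) <
      poissonBinomialExpect p (((Icc 1 N).erase i).erase j) (fun n => F (n + 1)) := by
    refine poissonBinomialExpect_lt_poissonBinomialExpect
      (fun k hk => hBNE.1 k (mem_of_mem_erase (mem_of_mem_erase hk))) fun n hn => ?_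
    rw [card_erase_of_mem (mem_erase.mpr ⟨hij.ne', hj⟩), card_erase_of_mem hi,
      Nat.card_Icc] at hn
    exact hFstrict (n + 1) (by omega) (by omega)
  have hr : r i ≤ r j := le_of_forall_le_succ_of_le hrmono hij.le hj'.2
  have hdiff := moveUtil_sub_moveUtil F r q p hi hj hij.ne
  have hui := hBNE.moveUtil_nonpos hi hpi1
  have huj := hBNE.moveUtil_nonneg hj hpj0
  by_contra! hji
  linarith [mul_pos (mul_pos hq0 (sub_pos.mpr hji)) (sub_pos.mpr hAB)]

/-- in any BNE, among agents who strictly randomize, an agent with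
smaller index (hence weakly smaller moving cost) moves with weakly smaller
probability. -/
theorem stmt10 (N : ℕ) (hN : 1 ≤ N) (F r : ℕ → ℝ)
    (hFnn : ∀ n, n ≤ N → 0 ≤ F n) (hF01 : F 0 = F 1)
    (hFmono : ∀ n, n + 1 ≤ N → F (n + 1) ≤ F n)
    (hFstrict : ∀ n, 1 ≤ n → n + 1 ≤ N → F (n + 1) < F n)
    (hr0 : r 0 = 0) (hrnn : ∀ i, i ≤ N → 0 ≤ r i)
    (hrmono : ∀ i, i + 1 ≤ N → r i ≤ r (i + 1))
    (q : ℝ) (hq0 : 0 < q) (hq1 : q ≤ 1)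
    (p : ℕ → ℝ) (hBNE : IsBNE N F r q p)
    (i j : ℕ) (hi : i ∈ Icc 1 N) (hj : j ∈ Icc 1 N) (hij : i < j)
    (hpi0 : 0 < p i) (hpi1 : p i < 1) (hpj0 : 0 < p j) (hpj1 : p j < 1) :
    p i ≤ p j :=
  stmt10_general N F r hFstrict hrmono q hq0 p hBNE i j hi hj hij hpi1 hpj0

end
end

section
/- Let q ∈ [0,1] and t ∈ [0,N] be a real number. The threshold profile p^t is a Bayes–Nash equilibrium at belief q if and only if i_lb(q) ≤ t ≤ i_ub(q). -/
open Finset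

noncomputable section

open scoped Classical

/-- The threshold profile `p^t` for a real threshold `t ≥ 0`:
agents `i < ⌈t⌉` move, agent `⌈t⌉` moves with probability `t + 1 − ⌈t⌉`, and
agents `i > ⌈t⌉` stay. -/
def thresh (t : ℝ) : ℕ → ℝ := fun i =>
  if i < Nat.ceil t then 1
  else if i = Nat.ceil t then t + 1 - (Nat.ceil t : ℝ)
  else 0

/-!
Put `c = ⌈t⌉` and `ε = t + 1 - c ∈ (0, 1]`. Under `p^t` the opponents of any agent are a
block of sure movers together with agent `c` moving with probability `ε`, so every utility
is an `ε`-mixture of two values of `F`, minus `r i`. Write `g i = q F(i) - r(i)`, which is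
nonincreasing on `{0, …, N}`. Agent `c` is willing to move exactly when `g c ≥ 0`, i.e.
`t ≤ i_ub(q)`; agent `c` (if `ε < 1`) and the agents above `c` refuse exactly when `g n ≤ 0`
for every `n > t`, i.e. `i_lb(q) ≤ t`. Monotonicity of `F` and `r` turns these two
conditions into the best-response conditions of all remaining agents.
-/

section ExpectCard

variable {α : Type*} [DecidableEq α] (p : α → ℝ)

/-- `E[f #T]` for the random subset `T ⊆ s` that contains each `j` independently with
probability `p j`. -/
def expectCard (s : Finset α) (f : ℕ → ℝ) : ℝ :=
  ∑ T ∈ s.powerset, (∏ j ∈ T, p j) * (∏ j ∈ s \ T, (1 - p j)) * f #T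

variable {p}

theorem expectCard_eq_of_indicator {s A : Finset α} (hA : A ⊆ s) (h1 : ∀ j ∈ A, p j = 1)
    (h0 : ∀ j ∈ s \ A, p j = 0) (f : ℕ → ℝ) : expectCard p s f = f #A := by
  rw [expectCard, sum_eq_single_of_mem A (mem_powerset.2 hA), prod_eq_one h1,
    prod_eq_one fun j hj => by rw [h0 j hj, sub_zero], one_mul, one_mul]
  intro T hTs hTA
  by_cases hsub : T ⊆ A
  · obtain ⟨j, hjA, hjT⟩ := not_subset.1 fun h => hTA (hsub.antisymm h)
    rw [prod_eq_zero (mem_sdiff.2 ⟨hA hjA, hjT⟩) (by rw [h1 j hjA, sub_self]), mul_zero,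
      zero_mul]
  · obtain ⟨j, hjT, hjA⟩ := not_subset.1 hsub
    rw [prod_eq_zero hjT (h0 j (mem_sdiff.2 ⟨mem_powerset.1 hTs hjT, hjA⟩)), zero_mul,
      zero_mul]

theorem expectCard_insert {s : Finset α} {c : α} (hc : c ∉ s) (f : ℕ → ℝ) :
    expectCard p (insert c s) f
      = (1 - p c) * expectCard p s f + p c * expectCard p s (fun n => f (n + 1)) := by
  rw [expectCard, sum_powerset_insert hc, expectCard, expectCard, mul_sum, mul_sum]
  congr 1 <;> refine sum_congr rfl fun T hT => ?_
  · have hcT : c ∉ T := fun h => hc (mem_powerset.1 hT h)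
    rw [insert_sdiff_of_notMem _ hcT, prod_insert fun h => hc (mem_sdiff.1 h).1]
    ring
  · have hcT : c ∉ T := fun h => hc (mem_powerset.1 hT h)
    rw [insert_sdiff_insert, sdiff_insert_of_notMem hc, prod_insert hcT,
      card_insert_of_notMem hcT]
    ring

end ExpectCard

theorem moveUtil_eq_expectCard (N : ℕ) (F r : ℕ → ℝ) (q : ℝ) (p : ℕ → ℝ) (i : ℕ) :
    moveUtil N F r q p i
      = q * expectCard p ((Icc 1 N).erase i) (fun n => F (n + 1)) - r i := rfl

section Threshold

variable {t : ℝ}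

theorem thresh_of_lt {i : ℕ} (h : i < ⌈t⌉₊) : thresh t i = 1 := if_pos h

theorem thresh_ceil (t : ℝ) : thresh t ⌈t⌉₊ = t + 1 - ⌈t⌉₊ := by simp [thresh]

theorem thresh_of_ceil_lt {i : ℕ} (h : ⌈t⌉₊ < i) : thresh t i = 0 := by
  rw [thresh, if_neg h.not_gt, if_neg h.ne']

theorem add_one_sub_ceil_pos (ht : 0 ≤ t) : 0 < t + 1 - ⌈t⌉₊ := by
  linarith [Nat.ceil_lt_add_one ht]

theorem add_one_sub_ceil_le_one (t : ℝ) : t + 1 - ⌈t⌉₊ ≤ 1 := by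
  linarith [Nat.le_ceil t]

theorem thresh_mem_Icc (ht : 0 ≤ t) (i : ℕ) : thresh t i ∈ Set.Icc 0 1 := by
  have := add_one_sub_ceil_pos ht
  have := add_one_sub_ceil_le_one t
  unfold thresh
  split_ifs <;> constructor <;> linarith

theorem expectCard_thresh_of_notMem {s : Finset ℕ} (hc : ⌈t⌉₊ ∉ s) (f : ℕ → ℝ) :
    expectCard (thresh t) s f = f #{j ∈ s | j < ⌈t⌉₊} :=
  expectCard_eq_of_indicator (filter_subset _ s)
    (fun j hj => thresh_of_lt (mem_filter.1 hj).2)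
    (fun j hj => by
      simp only [mem_sdiff, mem_filter, not_and, not_lt] at hj
      exact thresh_of_ceil_lt ((hj.2 hj.1).lt_of_ne fun h => hc (h ▸ hj.1)))
    f

theorem expectCard_thresh_of_mem {s : Finset ℕ} (hc : ⌈t⌉₊ ∈ s) (f : ℕ → ℝ) :
    expectCard (thresh t) s f
      = (1 - (t + 1 - ⌈t⌉₊)) * f #{j ∈ s | j < ⌈t⌉₊}
        + (t + 1 - ⌈t⌉₊) * f (#{j ∈ s | j < ⌈t⌉₊} + 1) := by
  have hfilter : {j ∈ s.erase ⌈t⌉₊ | j < ⌈t⌉₊} = {j ∈ s | j < ⌈t⌉₊} := by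
    rw [filter_erase, erase_eq_of_notMem (by simp)]
  have hsplit := expectCard_insert (p := thresh t) (notMem_erase ⌈t⌉₊ s) f
  rw [insert_erase hc] at hsplit
  rw [hsplit, thresh_ceil, expectCard_thresh_of_notMem (notMem_erase _ s),
    expectCard_thresh_of_notMem (notMem_erase _ s), hfilter]

end Threshold

section ThresholdUtility

variable {N : ℕ} {F r : ℕ → ℝ} {q t : ℝ} {i : ℕ}

theorem filter_erase_Icc_lt {c : ℕ} (hcN : c ≤ N) :
    {j ∈ (Icc 1 N).erase i | j < c} = (Ico 1 c).erase i := by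
  ext j
  simp only [mem_filter, mem_erase, mem_Icc, mem_Ico]
  omega

theorem moveUtil_thresh_of_lt (hi : 1 ≤ i) (hic : i < ⌈t⌉₊) (hcN : ⌈t⌉₊ ≤ N) :
    moveUtil N F r q (thresh t) i
      = q * ((1 - (t + 1 - ⌈t⌉₊)) * F (⌈t⌉₊ - 1) + (t + 1 - ⌈t⌉₊) * F ⌈t⌉₊) - r i := by
  rw [moveUtil_eq_expectCard,
    expectCard_thresh_of_mem (by simp only [mem_erase, mem_Icc]; omega), filter_erase_Icc_lt hcN,
    card_erase_of_mem (by simp only [mem_Ico]; omega), Nat.card_Ico,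
    show ⌈t⌉₊ - 1 - 1 + 1 = ⌈t⌉₊ - 1 by omega, Nat.sub_add_cancel (by omega : 1 ≤ ⌈t⌉₊)]

theorem moveUtil_thresh_ceil (hc : 1 ≤ ⌈t⌉₊) (hcN : ⌈t⌉₊ ≤ N) :
    moveUtil N F r q (thresh t) ⌈t⌉₊ = q * F ⌈t⌉₊ - r ⌈t⌉₊ := by
  rw [moveUtil_eq_expectCard, expectCard_thresh_of_notMem (notMem_erase _ _),
    filter_erase_Icc_lt hcN, erase_eq_of_notMem (by simp), Nat.card_Ico,
    Nat.sub_add_cancel hc]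

theorem moveUtil_thresh_of_gt (ht : 0 ≤ t) (hci : ⌈t⌉₊ < i) (hiN : i ≤ N) :
    moveUtil N F r q (thresh t) i
      = q * ((1 - (t + 1 - ⌈t⌉₊)) * F ⌈t⌉₊ + (t + 1 - ⌈t⌉₊) * F (⌈t⌉₊ + 1)) - r i := by
  rcases Nat.eq_zero_or_pos ⌈t⌉₊ with hc | hc
  · have ht0 : t = 0 := le_antisymm (Nat.ceil_eq_zero.1 hc) ht
    rw [moveUtil_eq_expectCard, expectCard_thresh_of_notMem (by simp [hc]),
      filter_erase_Icc_lt (by omega), hc]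
    simp [ht0]
  · rw [moveUtil_eq_expectCard,
      expectCard_thresh_of_mem (by simp only [mem_erase, mem_Icc]; omega),
      filter_erase_Icc_lt (by omega), erase_eq_of_notMem (by simp only [mem_Ico]; omega),
      Nat.card_Ico, Nat.sub_add_cancel hc]

end ThresholdUtility

section Bounds

variable {N : ℕ} {F r : ℕ → ℝ} {q t : ℝ}

theorem le_iUB_iff (hg : AntitoneOn (fun i => q * F i - r i) (Set.Iic N)) {m : ℕ} (hm : 0 < m)
    (hmN : m ≤ N) : m ≤ iUB N F r q ↔ 0 ≤ q * F m - r m := by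
  refine ⟨fun h => ?_, fun h => le_sup (f := id) (mem_filter.2 ⟨mem_range.2 (by omega), h⟩)⟩
  have hne : ((range (N + 1)).filter (fun i => 0 ≤ q * F i - r i)).Nonempty := by
    rw [nonempty_iff_ne_empty]
    intro he
    rw [iUB, he, sup_empty, Nat.bot_eq_zero] at h
    omega
  obtain ⟨k, hk, hk_eq⟩ := exists_mem_eq_sup _ hne id
  rw [iUB, hk_eq] at h
  rw [mem_filter, mem_range] at hk
  exact hk.2.trans (hg (Set.mem_Iic.2 hmN) (Set.mem_Iic.2 (by omega)) h)

theorem real_le_iUB_iff (hg : AntitoneOn (fun i => q * F i - r i) (Set.Iic N))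
    (htN : t ≤ N) : t ≤ (iUB N F r q : ℝ) ↔ (0 < ⌈t⌉₊ → 0 ≤ q * F ⌈t⌉₊ - r ⌈t⌉₊) := by
  rw [← Nat.ceil_le]
  rcases Nat.eq_zero_or_pos ⌈t⌉₊ with h | h
  · simp [h]
  · rw [le_iUB_iff hg h (Nat.ceil_le.2 htN)]
    exact (imp_iff_right h).symm

theorem iLB_le_iff (ht : 0 ≤ t) :
    (iLB N F r q : ℝ) ≤ t ↔ ∀ n ≤ N, t < n → q * F n - r n ≤ 0 := by
  rw [← Nat.le_floor_iff ht, iLB, Finset.sup_le_iff]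
  refine forall_congr' fun n => ?_
  rw [mem_filter, mem_range, Nat.lt_succ_iff, id, Nat.le_floor_iff ht]
  constructor
  · intro h hn htn
    by_contra hpos
    linarith [h ⟨hn, not_le.1 hpos⟩]
  · rintro h ⟨hn, hpos⟩
    by_contra hlt
    linarith [h hn (not_le.1 hlt)]

end Bounds

theorem isBNE_iff {N : ℕ} {F r : ℕ → ℝ} {q : ℝ} {p : ℕ → ℝ} :
    IsBNE N F r q p ↔ (∀ i ∈ Icc 1 N, 0 ≤ p i ∧ p i ≤ 1) ∧
      ∀ i ∈ Icc 1 N, (p i ≠ 0 → 0 ≤ moveUtil N F r q p i) ∧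
        (p i ≠ 1 → moveUtil N F r q p i ≤ 0) := by
  simp only [IsBNE, ← not_lt, not_imp_not, and_comm]

section Equilibrium

variable {N : ℕ} {F r : ℕ → ℝ} {q t : ℝ} {i : ℕ}

theorem le_moveUtil_thresh_of_lt (hF : AntitoneOn F (Set.Iic N)) (hr : MonotoneOn r (Set.Iic N))
    (hq : 0 ≤ q) (hi : 1 ≤ i) (hic : i < ⌈t⌉₊) (hcN : ⌈t⌉₊ ≤ N) :
    q * F ⌈t⌉₊ - r ⌈t⌉₊ ≤ moveUtil N F r q (thresh t) i := by
  have hFc : F ⌈t⌉₊ ≤ F (⌈t⌉₊ - 1) :=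
    hF (Set.mem_Iic.2 (by omega)) (Set.mem_Iic.2 hcN) (by omega)
  have hri : r i ≤ r ⌈t⌉₊ := hr (Set.mem_Iic.2 (by omega)) (Set.mem_Iic.2 hcN) hic.le
  rw [moveUtil_thresh_of_lt hi hic hcN]
  nlinarith [mul_nonneg hq (sub_nonneg.2 (add_one_sub_ceil_le_one t))]

theorem le_moveUtil_thresh_of_gt (hF : AntitoneOn F (Set.Iic N)) (hq : 0 ≤ q) (ht : 0 ≤ t)
    (hci : ⌈t⌉₊ < i) (hiN : i ≤ N) :
    q * F i - r i ≤ moveUtil N F r q (thresh t) i := by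
  have hFc : F i ≤ F ⌈t⌉₊ := hF (Set.mem_Iic.2 (by omega)) (Set.mem_Iic.2 hiN) hci.le
  have hFc' : F i ≤ F (⌈t⌉₊ + 1) := hF (Set.mem_Iic.2 (by omega)) (Set.mem_Iic.2 hiN) hci
  rw [moveUtil_thresh_of_gt ht hci hiN]
  nlinarith [mul_nonneg hq (sub_nonneg.2 (add_one_sub_ceil_le_one t)),
    mul_nonneg hq (add_one_sub_ceil_pos ht).le]

theorem moveUtil_thresh_of_gt_le (hr : MonotoneOn r (Set.Iic N)) (ht : 0 ≤ t)
    (hci : ⌈t⌉₊ < i) (hiN : i ≤ N) :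
    moveUtil N F r q (thresh t) i
      ≤ (1 - (t + 1 - ⌈t⌉₊)) * (q * F ⌈t⌉₊ - r ⌈t⌉₊)
        + (t + 1 - ⌈t⌉₊) * (q * F (⌈t⌉₊ + 1) - r (⌈t⌉₊ + 1)) := by
  have hrc : r ⌈t⌉₊ ≤ r i := hr (Set.mem_Iic.2 (by omega)) (Set.mem_Iic.2 hiN) hci.le
  have hrc' : r (⌈t⌉₊ + 1) ≤ r i := hr (Set.mem_Iic.2 (by omega)) (Set.mem_Iic.2 hiN) hci
  rw [moveUtil_thresh_of_gt ht hci hiN]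
  nlinarith [add_one_sub_ceil_le_one t, add_one_sub_ceil_pos ht]

theorem isBNE_thresh_iff (hF : AntitoneOn F (Set.Iic N)) (hr : MonotoneOn r (Set.Iic N))
    (hq : 0 ≤ q) (ht : 0 ≤ t) (htN : t ≤ N) :
    IsBNE N F r q (thresh t) ↔
      (0 < ⌈t⌉₊ → 0 ≤ q * F ⌈t⌉₊ - r ⌈t⌉₊) ∧ ∀ n ≤ N, t < n → q * F n - r n ≤ 0 := by
  have hcN : ⌈t⌉₊ ≤ N := Nat.ceil_le.2 htN
  have hε0 : t + 1 - ⌈t⌉₊ ≠ 0 := (add_one_sub_ceil_pos ht).ne'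
  have hε1 : t + 1 - ⌈t⌉₊ ≠ 1 ↔ t < ⌈t⌉₊ := by
    rw [(Nat.le_ceil t).lt_iff_ne, not_iff_not]
    constructor <;> intro h <;> linarith
  rw [isBNE_iff]
  constructor
  · rintro ⟨-, hbne⟩
    refine ⟨fun hc => ?_, fun n hnN htn => ?_⟩
    · simpa [thresh_ceil, hε0, moveUtil_thresh_ceil hc hcN] using
        (hbne ⌈t⌉₊ (mem_Icc.2 ⟨hc, hcN⟩)).1
    rcases (Nat.ceil_le.2 htn.le).eq_or_lt with rfl | hcn
    · have hc : 0 < ⌈t⌉₊ := Nat.cast_pos.1 (ht.trans_lt htn)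
      simpa [thresh_ceil, hε1.2 htn, moveUtil_thresh_ceil hc hcN] using
        (hbne ⌈t⌉₊ (mem_Icc.2 ⟨hc, hcN⟩)).2
    · exact (le_moveUtil_thresh_of_gt hF hq ht hcn hnN).trans
        ((hbne n (mem_Icc.2 ⟨by omega, hnN⟩)).2 (by simp [thresh_of_ceil_lt hcn]))
  · rintro ⟨hc, hn⟩
    refine ⟨fun i _ => thresh_mem_Icc ht i, fun i hi => ?_⟩
    rw [mem_Icc] at hi
    rcases lt_trichotomy i ⌈t⌉₊ with hic | rfl | hci
    · rw [thresh_of_lt hic]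
      exact ⟨fun _ => (hc (by omega)).trans (le_moveUtil_thresh_of_lt hF hr hq hi.1 hic hcN),
        fun h => absurd rfl h⟩
    · rw [thresh_ceil, moveUtil_thresh_ceil hi.1 hcN]
      exact ⟨fun _ => hc hi.1, fun h => hn _ hcN (hε1.1 h)⟩
    · rw [thresh_of_ceil_lt hci]
      refine ⟨fun h => absurd rfl h,
        fun _ => (moveUtil_thresh_of_gt_le hr ht hci hi.2).trans ?_⟩
      have hnext : q * F (⌈t⌉₊ + 1) - r (⌈t⌉₊ + 1) ≤ 0 :=
        hn _ (by omega) (by push_cast; linarith [Nat.le_ceil t])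
      have hcur : (1 - (t + 1 - ⌈t⌉₊)) * (q * F ⌈t⌉₊ - r ⌈t⌉₊) ≤ 0 := by
        by_cases htc : t < ⌈t⌉₊
        · exact mul_nonpos_of_nonneg_of_nonpos (sub_nonneg.2 (add_one_sub_ceil_le_one t))
            (hn _ hcN htc)
        · rw [not_not.1 (mt hε1.1 htc), sub_self, zero_mul]
      nlinarith [add_one_sub_ceil_pos ht]

end Equilibrium

theorem stmt11_general (N : ℕ) (F r : ℕ → ℝ)
    (hFmono : ∀ n, n + 1 ≤ N → F (n + 1) ≤ F n)
    (hrmono : ∀ i, i + 1 ≤ N → r i ≤ r (i + 1))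
    (q : ℝ) (hq0 : 0 ≤ q)
    (t : ℝ) (ht0 : 0 ≤ t) (htN : t ≤ (N : ℝ)) :
    IsBNE N F r q (thresh t) ↔
      ((iLB N F r q : ℝ) ≤ t ∧ t ≤ (iUB N F r q : ℝ)) := by
  have hF : AntitoneOn F (Set.Iic N) :=
    antitoneOn_of_succ_le Set.ordConnected_Iic fun n _ _ hn => hFmono n hn
  have hr : MonotoneOn r (Set.Iic N) :=
    monotoneOn_of_le_succ Set.ordConnected_Iic fun n _ _ hn => hrmono n hn
  have hg : AntitoneOn (fun i => q * F i - r i) (Set.Iic N) := fun a ha b hb hab =>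
    sub_le_sub (mul_le_mul_of_nonneg_left (hF ha hb hab) hq0) (hr ha hb hab)
  rw [isBNE_thresh_iff hF hr hq0 ht0 htN, iLB_le_iff ht0, real_le_iUB_iff hg htN]
  exact and_comm

/-- the threshold profile `p^t` is a BNE at belief `q` iff
`i_lb(q) ≤ t ≤ i_ub(q)`. -/
theorem stmt11 (N : ℕ) (hN : 1 ≤ N) (F r : ℕ → ℝ)
    (hFnn : ∀ n, n ≤ N → 0 ≤ F n) (hF01 : F 0 = F 1)
    (hFmono : ∀ n, n + 1 ≤ N → F (n + 1) ≤ F n)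
    (hr0 : r 0 = 0) (hrnn : ∀ i, i ≤ N → 0 ≤ r i)
    (hrmono : ∀ i, i + 1 ≤ N → r i ≤ r (i + 1))
    (q : ℝ) (hq0 : 0 ≤ q) (hq1 : q ≤ 1)
    (t : ℝ) (ht0 : 0 ≤ t) (htN : t ≤ (N : ℝ)) :
    IsBNE N F r q (thresh t) ↔
      ((iLB N F r q : ℝ) ≤ t ∧ t ≤ (iUB N F r q : ℝ)) :=
  stmt11_general N F r hFmono hrmono q hq0 t ht0 htN

end
end

section
/- For every q ∈ [0,1], the threshold profile p^{i_lb(q)} (in which agents 1,…,i_lb(q) move with probability 1 and agents i_lb(q)+1,…,N stay with probability 1) is a Bayes–Nash equilibrium at belief q. -/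
open Finset

noncomputable section

open scoped Classical

/-
Under a pure threshold profile the expected payoff collapses to a single term: an agent
`i ≤ k` shares the resource with exactly `k` movers, an agent `i > k` would be the
`(k+1)`-st. With `k = i_lb(q)`, the first gets `q F(k) − r(i) ≥ q F(k) − r(k) > 0` and the
second `q F(k+1) − r(i) ≤ q F(k+1) − r(k+1) ≤ 0`, by monotonicity of `r` and maximality of `k`.
-/

theorem monotoneOn_Iic_of_le_succ {α : Type*} [Preorder α] {f : ℕ → α} {N : ℕ}
    (hf : ∀ i, i + 1 ≤ N → f i ≤ f (i + 1)) : MonotoneOn f (Set.Iic N) := by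
  intro a _ b hb hab
  induction b, hab using Nat.le_induction with
  | base => exact le_rfl
  | succ n _ ih => exact (ih (Nat.le_of_succ_le hb)).trans (hf n hb)

section PureProfile

variable {α R : Type*} [DecidableEq α] [CommRing R] (P : α → Prop) [DecidablePred P]

theorem prod_ite_mul_prod_sdiff_one_sub_ite {s T : Finset α} (hT : T ⊆ s) :
    (∏ j ∈ T, if P j then (1 : R) else 0) * ∏ j ∈ s \ T, (1 - if P j then (1 : R) else 0)
      = if T = s.filter P then 1 else 0 := by
  have hcompl : ∀ j, (1 - if P j then (1 : R) else 0) = if ¬P j then 1 else 0 := by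
    intro j; split_ifs <;> simp
  simp only [hcompl, prod_boole, ← ite_and, mul_ite, mul_one, mul_zero]
  congr 1
  apply propext
  constructor
  · rintro ⟨hnP, hP⟩
    ext j
    by_cases hj : j ∈ T
    · simp [hj, hT hj, hP j hj]
    · by_cases hjs : j ∈ s
      · simp [hj, hjs, hnP j (mem_sdiff.mpr ⟨hjs, hj⟩)]
      · simp [hj, hjs]
  · rintro rfl
    exact ⟨fun j hj hPj => (mem_sdiff.mp hj).2 (mem_filter.mpr ⟨(mem_sdiff.mp hj).1, hPj⟩),
      fun j hj => (mem_filter.mp hj).2⟩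

theorem sum_powerset_pure_profile (s : Finset α) (g : Finset α → R) :
    ∑ T ∈ s.powerset,
        (∏ j ∈ T, if P j then (1 : R) else 0) * (∏ j ∈ s \ T, (1 - if P j then (1 : R) else 0))
          * g T
      = g (s.filter P) := by
  rw [sum_congr rfl fun T hT => by
    rw [prod_ite_mul_prod_sdiff_one_sub_ite P (mem_powerset.mp hT), ite_mul, one_mul, zero_mul]]
  exact sum_ite_eq' _ _ _ |>.trans (if_pos (mem_powerset.mpr (filter_subset _ _)))

end PureProfile

section Threshold

variable (N : ℕ) (F r : ℕ → ℝ) (q : ℝ)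

theorem moveUtil_threshold (k i : ℕ) :
    moveUtil N F r q (fun j => if j ≤ k then 1 else 0) i
      = q * F (#(((Icc 1 N).erase i).filter (· ≤ k)) + 1) - r i := by
  rw [moveUtil, sum_powerset_pure_profile (· ≤ k) _ fun T => F (#T + 1)]

theorem moveUtil_threshold_of_le {k i : ℕ} (hkN : k ≤ N) (hi : 1 ≤ i) (hik : i ≤ k) :
    moveUtil N F r q (fun j => if j ≤ k then 1 else 0) i = q * F k - r i := by
  have hset : ((Icc 1 N).erase i).filter (· ≤ k) = (Icc 1 k).erase i := by
    ext j
    simp only [mem_filter, mem_erase, mem_Icc]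
    omega
  rw [moveUtil_threshold, hset, card_erase_of_mem (mem_Icc.mpr ⟨hi, hik⟩), Nat.card_Icc]
  congr 3
  omega

theorem moveUtil_threshold_of_lt {k i : ℕ} (hkN : k ≤ N) (hki : k < i) :
    moveUtil N F r q (fun j => if j ≤ k then 1 else 0) i = q * F (k + 1) - r i := by
  have hset : ((Icc 1 N).erase i).filter (· ≤ k) = Icc 1 k := by
    ext j
    simp only [mem_filter, mem_erase, mem_Icc]
    omega
  rw [moveUtil_threshold, hset, Nat.card_Icc, Nat.add_sub_cancel]

theorem iLB_le : iLB N F r q ≤ N := by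
  refine Finset.sup_le fun b hb => ?_
  exact Nat.lt_succ_iff.mp (mem_range.mp (mem_filter.mp hb).1)

theorem iLB_payoff_pos (h : iLB N F r q ≠ 0) : 0 < q * F (iLB N F r q) - r (iLB N F r q) := by
  have hne : ((range (N + 1)).filter fun i => 0 < q * F i - r i).Nonempty := by
    by_contra hempty
    exact h (by rw [iLB, not_nonempty_iff_eq_empty.mp hempty, sup_empty]; rfl)
  obtain ⟨b, hb, hsup⟩ := exists_mem_eq_sup _ hne id
  rw [iLB, hsup]
  exact (mem_filter.mp hb).2

theorem payoff_nonpos_of_iLB_lt {i : ℕ} (hi : iLB N F r q < i) (hiN : i ≤ N) :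
    q * F i - r i ≤ 0 := by
  by_contra! hpos
  have : i ≤ iLB N F r q :=
    Finset.le_sup (f := id) (mem_filter.mpr ⟨mem_range.mpr (Nat.lt_succ_of_le hiN), hpos⟩)
  omega

end Threshold

theorem stmt12_general (N : ℕ) (F r : ℕ → ℝ)
    (hrmono : ∀ i, i + 1 ≤ N → r i ≤ r (i + 1))
    (q : ℝ) :
    IsBNE N F r q (fun i => if i ≤ iLB N F r q then 1 else 0) := by
  set k := iLB N F r q
  have hkN : k ≤ N := iLB_le N F r q
  have hr : MonotoneOn r (Set.Iic N) := monotoneOn_Iic_of_le_succ hrmono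
  refine ⟨fun i _ => by dsimp only; split_ifs <;> norm_num, fun i hi => ?_⟩
  obtain ⟨hi1, hiN⟩ := mem_Icc.mp hi
  rcases le_or_gt i k with hik | hik
  · have hpos : 0 < moveUtil N F r q (fun j => if j ≤ k then 1 else 0) i := by
      rw [moveUtil_threshold_of_le N F r q hkN hi1 hik]
      have := iLB_payoff_pos N F r q (by omega)
      linarith [hr (Set.mem_Iic.mpr (hik.trans hkN)) (Set.mem_Iic.mpr hkN) hik]
    exact ⟨fun _ => if_pos hik, fun hneg => absurd hneg hpos.not_gt⟩
  · have hnonpos : moveUtil N F r q (fun j => if j ≤ k then 1 else 0) i ≤ 0 := by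
      rw [moveUtil_threshold_of_lt N F r q hkN hik]
      have := payoff_nonpos_of_iLB_lt N F r q (Nat.lt_succ_self k) (by omega)
      linarith [hr (Set.mem_Iic.mpr (by omega)) (Set.mem_Iic.mpr hiN) (Nat.succ_le_of_lt hik)]
    exact ⟨fun hpos => absurd hpos hnonpos.not_gt, fun _ => if_neg hik.not_ge⟩

/-- for every belief `q`, the pure threshold profile in which agents
`1,…,i_lb(q)` move and agents `i_lb(q)+1,…,N` stay is a Bayes–Nash equilibrium. -/
theorem stmt12 (N : ℕ) (hN : 1 ≤ N) (F r : ℕ → ℝ)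
    (hFnn : ∀ n, n ≤ N → 0 ≤ F n) (hF01 : F 0 = F 1)
    (hFmono : ∀ n, n + 1 ≤ N → F (n + 1) ≤ F n)
    (hr0 : r 0 = 0) (hrnn : ∀ i, i ≤ N → 0 ≤ r i)
    (hrmono : ∀ i, i + 1 ≤ N → r i ≤ r (i + 1))
    (q : ℝ) (hq0 : 0 ≤ q) (hq1 : q ≤ 1) :
    IsBNE N F r q (fun i => if i ≤ iLB N F r q then 1 else 0) :=
  stmt12_general N F r hrmono q

end
end

section
/- Suppose n ↦ n·F(n) is concave on {0,…,N} (i.e., (n+2)·F(n+2) + n·F(n) ≤ 2·(n+1)·F(n+1) for 0 ≤ n ≤ N−2). Then for every q ∈ [0,1]: (i) the sequence n ↦ W(q,n) is concave on {0,…,N}, i.e., W(q,n+1) − W(q,n) is nonincreasing in n; and (ii) if i_lb(q) ≤ N−1, then W(q, i_lb(q)+1) ≤ W(q, i_lb(q)). -/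
open Finset

noncomputable section

open scoped Classical

/-- `W(q,n) = q·n·F(n) − Σ_{i=1}^n r(i)`: welfare of the pure threshold profile `n`. -/
def intWelfare (F r : ℕ → ℝ) (q : ℝ) (n : ℕ) : ℝ :=
  q * n * F n - ∑ i ∈ Icc 1 n, r i

theorem intWelfare_succ_sub (F r : ℕ → ℝ) (q : ℝ) (n : ℕ) :
    intWelfare F r q (n + 1) - intWelfare F r q n =
      q * ((n + 1) * F (n + 1) - n * F n) - r (n + 1) := by
  simp only [intWelfare, sum_Icc_succ_top (Nat.le_add_left 1 n)]
  push_cast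
  ring

theorem intWelfare_concave_step {F r : ℕ → ℝ} {q : ℝ} (hq : 0 ≤ q) {n : ℕ}
    (hnF : ((n : ℝ) + 2) * F (n + 2) + n * F n ≤ 2 * ((n : ℝ) + 1) * F (n + 1))
    (hr : r (n + 1) ≤ r (n + 2)) :
    intWelfare F r q (n + 2) - intWelfare F r q (n + 1) ≤
      intWelfare F r q (n + 1) - intWelfare F r q n := by
  rw [intWelfare_succ_sub F r q (n + 1), intWelfare_succ_sub F r q n]
  have hscaled :
      q * (((n : ℝ) + 2) * F (n + 2) + n * F n) ≤ q * (2 * ((n : ℝ) + 1) * F (n + 1)) :=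
    mul_le_mul_of_nonneg_left hnF hq
  push_cast
  linarith

/-- Besides its own nonpositive net gain, agent `n + 1` dilutes the share `F` of the `n`
agents already present. -/
theorem intWelfare_succ_le {F r : ℕ → ℝ} {q : ℝ} (hq : 0 ≤ q) {n : ℕ}
    (hF : F (n + 1) ≤ F n) (hgain : q * F (n + 1) - r (n + 1) ≤ 0) :
    intWelfare F r q (n + 1) ≤ intWelfare F r q n := by
  have hdilute : q * (n * F (n + 1)) ≤ q * (n * F n) :=
    mul_le_mul_of_nonneg_left (mul_le_mul_of_nonneg_left hF n.cast_nonneg) hq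
  have hstep := intWelfare_succ_sub F r q n
  linarith

theorem gain_nonpos_of_iLB_lt {N : ℕ} {F r : ℕ → ℝ} {q : ℝ} {i : ℕ}
    (hi : iLB N F r q < i) (hiN : i ≤ N) : q * F i - r i ≤ 0 := by
  by_contra! hpos
  have hmem : i ∈ (range (N + 1)).filter (fun i => 0 < q * F i - r i) :=
    mem_filter.mpr ⟨mem_range.mpr (Nat.lt_succ_of_le hiN), hpos⟩
  exact hi.not_ge (le_sup (f := id) hmem)

theorem stmt14_general (N : ℕ) (F r : ℕ → ℝ)
    (hFmono : ∀ n, n + 1 ≤ N → F (n + 1) ≤ F n)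
    (hnFconc : ∀ n, n + 2 ≤ N →
      ((n : ℝ) + 2) * F (n + 2) + (n : ℝ) * F n ≤ 2 * ((n : ℝ) + 1) * F (n + 1))
    (hrmono : ∀ i, i + 1 ≤ N → r i ≤ r (i + 1))
    (q : ℝ) (hq0 : 0 ≤ q) :
    (∀ n, n + 2 ≤ N →
      intWelfare F r q (n + 2) - intWelfare F r q (n + 1) ≤
        intWelfare F r q (n + 1) - intWelfare F r q n) ∧
    (iLB N F r q + 1 ≤ N →
      intWelfare F r q (iLB N F r q + 1) ≤ intWelfare F r q (iLB N F r q)) :=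
  ⟨fun n hn => intWelfare_concave_step hq0 (hnFconc n hn) (hrmono (n + 1) hn),
    fun hle => intWelfare_succ_le hq0 (hFmono _ hle)
      (gain_nonpos_of_iLB_lt (Nat.lt_succ_self _) hle)⟩

/-- if `n·F(n)` is concave on `{0,…,N}`, then (i) `n ↦ W(q,n)` is
concave on `{0,…,N}` and (ii) `W(q, i_lb(q)+1) ≤ W(q, i_lb(q))` whenever
`i_lb(q) ≤ N − 1`. -/
theorem stmt14 (N : ℕ) (hN : 1 ≤ N) (F r : ℕ → ℝ)
    (hFnn : ∀ n, n ≤ N → 0 ≤ F n) (hF01 : F 0 = F 1)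
    (hFmono : ∀ n, n + 1 ≤ N → F (n + 1) ≤ F n)
    (hnFconc : ∀ n, n + 2 ≤ N →
      ((n : ℝ) + 2) * F (n + 2) + (n : ℝ) * F n ≤ 2 * ((n : ℝ) + 1) * F (n + 1))
    (hr0 : r 0 = 0) (hrnn : ∀ i, i ≤ N → 0 ≤ r i)
    (hrmono : ∀ i, i + 1 ≤ N → r i ≤ r (i + 1))
    (q : ℝ) (hq0 : 0 ≤ q) (hq1 : q ≤ 1) :
    (∀ n, n + 2 ≤ N →
      intWelfare F r q (n + 2) - intWelfare F r q (n + 1) ≤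
        intWelfare F r q (n + 1) - intWelfare F r q n) ∧
    (iLB N F r q + 1 ≤ N →
      intWelfare F r q (iLB N F r q + 1) ≤ intWelfare F r q (iLB N F r q)) :=
  stmt14_general N F r hFmono hnFconc hrmono q hq0

end
end
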